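/- arXiv:2502.14408 — 6 statements merged into one kernel-verified Lean document; each statement's English description precedes it below -/
import Mathlib

section
/- Let A be an integral domain, P ∈ A[Y] a monic polynomial of degree n ≥ 1, and p a positive divisor of n whose image in A is invertible. Then there exists a unique monic polynomial Q ∈ A[Y] such that deg(P − Q^p) < n − n/p; moreover this Q has degree n/p. -/
open Polynomial Finset

private lemma approx_step {A : Type*} [CommRing A] [IsDomain A] (P : A[X]) (m q : ℕ)
    (t1 : A) (ht1 : ((q + 1 : ℕ) : A) * t1 = 1)
    (j : ℕ) (hj : j < m) (Q : A[X]) (hQ : Q.Monic) (hQd : Q.natDegree = m)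
    (h : (P - Q ^ (q + 1)).degree < (((q + 1) * m - j : ℕ) : WithBot ℕ)) :
    ∃ Q' : A[X], Q'.Monic ∧ Q'.natDegree = m ∧
      (P - Q' ^ (q + 1)).degree < (((q + 1) * m - (j + 1) : ℕ) : WithBot ℕ) := by
  set N := (q + 1) * m with hN
  have hqmm : q * m + m = N := by rw [hN]; ring
  have hmN : m ≤ N := Nat.le_mul_of_pos_left m (Nat.succ_pos q)
  set c := (P - Q ^ (q + 1)).coeff (N - j - 1) with hc
  set t := t1 * c with ht
  set e : A[X] := C t * X ^ (m - j - 1) with he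
  have hedeg : e.degree ≤ ((m - j - 1 : ℕ) : WithBot ℕ) := degree_C_mul_X_pow_le _ _
  have hQdeg : Q.degree = (m : WithBot ℕ) := by
    rw [degree_eq_natDegree hQ.ne_zero, hQd]
  have heQ : e.degree < Q.degree := by
    rw [hQdeg]
    exact lt_of_le_of_lt hedeg (by exact_mod_cast (by omega : m - j - 1 < m))
  refine ⟨Q + e, hQ.add_of_left heQ, ?_, ?_⟩
  · rw [← hQd]
    exact natDegree_eq_of_degree_eq (degree_add_eq_left_of_degree_lt heQ)
  set M := Q ^ q * X ^ (m - j - 1) with hM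
  have hMm : M.Monic := (hQ.pow q).mul (monic_X_pow _)
  have hMd : M.natDegree = N - j - 1 := by
    rw [hM, (hQ.pow q).natDegree_mul (monic_X_pow _), hQ.natDegree_pow, natDegree_X_pow, hQd]
    omega
  set D := (Q + e) ^ (q + 1) - Q ^ (q + 1) with hDdef
  clear_value N c t e M D
  have hD : D = (∑ k ∈ range q, Q ^ k * e ^ (q + 1 - k) * ((q + 1).choose k : A[X]))
      + C c * M := by
    have hpt : ((q + 1 : ℕ) : A) * t = c := by
      rw [ht, ← mul_assoc, ht1, one_mul]
    have h1 : Q ^ q * e ^ (q + 1 - q) * ((q + 1).choose q : A[X]) = C c * M := by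
      rw [Nat.choose_succ_self_right, Nat.add_sub_cancel_left, pow_one,
        he, hM, ← hpt, C_mul, C_eq_natCast]
      ring
    rw [hDdef, add_pow, Finset.sum_range_succ, Finset.sum_range_succ, h1]
    simp [Nat.choose_self]
  have hterm : ∀ k ∈ range q,
      (Q ^ k * e ^ (q + 1 - k) * ((q + 1).choose k : A[X])).degree
        < ((N - j - 1 : ℕ) : WithBot ℕ) := by
    intro k hk
    have hk' : k < q := mem_range.mp hk
    have h1 : (Q ^ k).degree ≤ ((k * m : ℕ) : WithBot ℕ) :=
      degree_le_natDegree.trans_eq (by rw [hQ.natDegree_pow, hQd])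
    have h2 : (e ^ (q + 1 - k)).degree ≤ (((q + 1 - k) * (m - j - 1) : ℕ) : WithBot ℕ) := by
      calc (e ^ (q + 1 - k)).degree ≤ (q + 1 - k) • e.degree := degree_pow_le _ _
        _ ≤ (q + 1 - k) • ((m - j - 1 : ℕ) : WithBot ℕ) := nsmul_le_nsmul_right hedeg _
        _ = (((q + 1 - k) * (m - j - 1) : ℕ) : WithBot ℕ) := by
            rw [nsmul_eq_mul]; push_cast; ring
    have h3 : (((q + 1).choose k : A[X])).degree ≤ 0 := by
      rw [← C_eq_natCast (R := A) ((q + 1).choose k)]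
      exact degree_C_le
    have hnum : k * m + (q + 1 - k) * (m - j - 1) < N - j - 1 := by
      have e1 : k * m + (q + 1 - k) * (m - j - 1) + (q + 1 - k) * (j + 1) = N := by
        have h5 : m - j - 1 + (j + 1) = m := by omega
        have h6 : k + (q + 1 - k) = q + 1 := by omega
        calc k * m + (q + 1 - k) * (m - j - 1) + (q + 1 - k) * (j + 1)
            = k * m + (q + 1 - k) * m := by rw [add_assoc, ← Nat.mul_add, h5]
          _ = (k + (q + 1 - k)) * m := by rw [Nat.add_mul]
          _ = N := by rw [h6, hN]
      have e2 : 2 * (j + 1) ≤ (q + 1 - k) * (j + 1) :=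
        Nat.mul_le_mul_right _ (by omega)
      have key : ∀ a b d : ℕ, a + b + d = N → 2 * (j + 1) ≤ d → a + b < N - j - 1 := by
        intro a b d e1 e2; omega
      exact key _ _ _ e1 e2
    calc (Q ^ k * e ^ (q + 1 - k) * ((q + 1).choose k : A[X])).degree
        ≤ (Q ^ k * e ^ (q + 1 - k)).degree + (((q + 1).choose k : A[X])).degree :=
          degree_mul_le _ _
      _ ≤ (Q ^ k).degree + (e ^ (q + 1 - k)).degree + 0 :=
          add_le_add (degree_mul_le _ _) h3
      _ ≤ ((k * m : ℕ) : WithBot ℕ) + (((q + 1 - k) * (m - j - 1) : ℕ) : WithBot ℕ) + 0 :=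
          add_le_add (add_le_add h1 h2) le_rfl
      _ = ((k * m + (q + 1 - k) * (m - j - 1) : ℕ) : WithBot ℕ) := by push_cast; ring
      _ < ((N - j - 1 : ℕ) : WithBot ℕ) := by exact_mod_cast hnum
  have hDdeg : D.degree ≤ ((N - j - 1 : ℕ) : WithBot ℕ) := by
    rw [hD]
    refine le_trans (degree_add_le _ _) (max_le ?_ ?_)
    · exact le_trans (degree_sum_le _ _) (Finset.sup_le fun k hk => le_of_lt (hterm k hk))
    · calc (C c * M).degree ≤ (C c).degree + M.degree := degree_mul_le _ _
        _ ≤ 0 + ((N - j - 1 : ℕ) : WithBot ℕ) := by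
            exact add_le_add degree_C_le (by rw [degree_eq_natDegree hMm.ne_zero, hMd])
        _ = ((N - j - 1 : ℕ) : WithBot ℕ) := zero_add _
  have hDcoeff : D.coeff (N - j - 1) = c := by
    rw [hD, coeff_add, finset_sum_coeff,
      Finset.sum_eq_zero (fun k hk => coeff_eq_zero_of_degree_lt (hterm k hk)),
      coeff_C_mul, ← hMd, hMm.coeff_natDegree, mul_one, zero_add]
  have hsub : P - (Q + e) ^ (q + 1) = (P - Q ^ (q + 1)) - D := by rw [hDdef]; ring
  rw [show N - (j + 1) = N - j - 1 by omega, degree_lt_iff_coeff_zero]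
  intro i hi
  rw [hsub, coeff_sub]
  rcases eq_or_lt_of_le hi with rfl | hi'
  · rw [hDcoeff, ← hc, sub_self]
  · have h1 : (P - Q ^ (q + 1)).coeff i = 0 :=
      coeff_eq_zero_of_degree_lt (h.trans_le (by exact_mod_cast (by omega : N - j ≤ i)))
    have h2 : D.coeff i = 0 :=
      coeff_eq_zero_of_degree_lt (hDdeg.trans_lt (by exact_mod_cast hi'))
    rw [h1, h2, sub_zero]

private lemma approx_exists {A : Type*} [CommRing A] [IsDomain A] (P : A[X]) (m q : ℕ)
    (t1 : A) (ht1 : ((q + 1 : ℕ) : A) * t1 = 1) (hm : 1 ≤ m)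
    (hP : P.Monic) (hdeg : P.natDegree = (q + 1) * m) :
    ∀ j, j ≤ m → ∃ Q : A[X], Q.Monic ∧ Q.natDegree = m ∧
      (P - Q ^ (q + 1)).degree < (((q + 1) * m - j : ℕ) : WithBot ℕ) := by
  intro j
  induction j with
  | zero =>
    intro _
    refine ⟨X ^ m, monic_X_pow m, natDegree_X_pow m, ?_⟩
    have h1 : (X ^ m : A[X]) ^ (q + 1) = X ^ ((q + 1) * m) := by
      rw [← pow_mul, mul_comm]
    have h2 : P.degree = (((q + 1) * m : ℕ) : WithBot ℕ) := by
      rw [degree_eq_natDegree hP.ne_zero, hdeg]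
    rw [Nat.sub_zero, ← h2, h1]
    exact degree_sub_lt (by rw [h2, degree_X_pow]) hP.ne_zero
      (by rw [hP.leadingCoeff, (monic_X_pow ((q + 1) * m)).leadingCoeff])
  | succ j ih =>
    intro hj
    obtain ⟨Q, hQ, hQd, hlt⟩ := ih (by omega)
    exact approx_step P m q t1 ht1 j (by omega) Q hQ hQd hlt

private lemma approx_deg {A : Type*} [CommRing A] [IsDomain A] (P : A[X]) (n p : ℕ)
    (hP : P.Monic) (hdeg : P.natDegree = n) (hn : 1 ≤ n) (hp : 0 < p)
    (Q : A[X]) (hQ : Q.Monic)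
    (h : (P - Q ^ p).degree < ((n - n / p : ℕ) : WithBot ℕ)) : Q.natDegree = n / p := by
  have hPdeg : P.degree = (n : WithBot ℕ) := by
    rw [degree_eq_natDegree hP.ne_zero, hdeg]
  have h1 : (P - Q ^ p).degree < P.degree := by
    rw [hPdeg]
    exact h.trans_le (by exact_mod_cast Nat.sub_le n (n / p))
  have h2 := degree_sub_eq_left_of_degree_lt h1
  rw [sub_sub_cancel] at h2
  have h3 : (Q ^ p).natDegree = n := natDegree_eq_of_degree_eq_some (h2.trans hPdeg)
  rw [hQ.natDegree_pow] at h3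
  rw [← h3, Nat.mul_div_cancel_left _ hp]

private lemma approx_unique {A : Type*} [CommRing A] [IsDomain A] (P : A[X]) (n p : ℕ)
    (hP : P.Monic) (hdeg : P.natDegree = n) (hn : 1 ≤ n) (hp : 0 < p) (hdvd : p ∣ n)
    (hinv : IsUnit (p : A)) (Q₁ Q₂ : A[X]) (hQ₁ : Q₁.Monic) (hQ₂ : Q₂.Monic)
    (h₁ : (P - Q₁ ^ p).degree < ((n - n / p : ℕ) : WithBot ℕ))
    (h₂ : (P - Q₂ ^ p).degree < ((n - n / p : ℕ) : WithBot ℕ)) : Q₁ = Q₂ := by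
  by_contra hne
  set m := n / p with hm
  have hd₁ : Q₁.natDegree = m := approx_deg P n p hP hdeg hn hp Q₁ hQ₁ h₁
  have hd₂ : Q₂.natDegree = m := approx_deg P n p hP hdeg hn hp Q₂ hQ₂ h₂
  have hnm : n - m = (p - 1) * m := by
    have : p * m = n := Nat.mul_div_cancel' hdvd
    have : p * m = p * m := rfl
    rw [Nat.sub_one_mul, Nat.mul_div_cancel' hdvd]
  have hkey : (Q₁ ^ p - Q₂ ^ p).degree < ((n - m : ℕ) : WithBot ℕ) := by
    have : Q₁ ^ p - Q₂ ^ p = (P - Q₂ ^ p) - (P - Q₁ ^ p) := by ring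
    rw [this]
    exact lt_of_le_of_lt (degree_sub_le _ _) (max_lt h₂ h₁)
  set S := ∑ i ∈ Finset.range p, Q₁ ^ i * Q₂ ^ (p - 1 - i) with hS
  have hterm : ∀ i ∈ Finset.range p, (Q₁ ^ i * Q₂ ^ (p - 1 - i)).Monic ∧
      (Q₁ ^ i * Q₂ ^ (p - 1 - i)).natDegree = (p - 1) * m := by
    intro i hi
    have hi' : i < p := Finset.mem_range.mp hi
    refine ⟨(hQ₁.pow i).mul (hQ₂.pow _), ?_⟩
    rw [(hQ₁.pow i).natDegree_mul (hQ₂.pow _), hQ₁.natDegree_pow, hQ₂.natDegree_pow,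
      hd₁, hd₂, ← Nat.add_mul]
    congr 1
    omega
  have hScoeff : S.coeff ((p - 1) * m) = (p : A) := by
    rw [hS, finset_sum_coeff]
    rw [Finset.sum_congr rfl (fun i hi => by
      rw [← (hterm i hi).2, (hterm i hi).1.coeff_natDegree])]
    simp
  have hSne : (((p - 1) * m : ℕ) : WithBot ℕ) ≤ S.degree :=
    le_degree_of_ne_zero (by rw [hScoeff]; exact hinv.ne_zero)
  have hfac : S * (Q₁ - Q₂) = Q₁ ^ p - Q₂ ^ p := geom_sum₂_mul Q₁ Q₂ p
  have hsub_ne : Q₁ - Q₂ ≠ 0 := sub_ne_zero_of_ne hne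
  have hge : (((p - 1) * m : ℕ) : WithBot ℕ) ≤ (Q₁ ^ p - Q₂ ^ p).degree := by
    rw [← hfac, degree_mul]
    calc (((p - 1) * m : ℕ) : WithBot ℕ) = ((p - 1) * m : ℕ) + 0 := by rw [add_zero]
      _ ≤ S.degree + (Q₁ - Q₂).degree :=
        add_le_add hSne (zero_le_degree_iff.mpr hsub_ne)
  rw [hnm] at hkey
  exact absurd (hge.trans_lt hkey) (lt_irrefl _)



/-- **Existence and uniqueness of approximate roots.**
Let `A` be an integral domain, `P ∈ A[Y]` a monic polynomial of degree `n ≥ 1`, and `p` a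
positive divisor of `n` whose image in `A` is invertible.  Then there exists a unique monic
polynomial `Q ∈ A[Y]` such that `deg (P - Q ^ p) < n - n / p`; moreover this `Q` has
degree `n / p`. -/
theorem stmt_0 {A : Type*} [CommRing A] [IsDomain A] (P : Polynomial A) (n p : ℕ)
    (hP : P.Monic) (hdeg : P.natDegree = n) (hn : 1 ≤ n) (hp : 0 < p) (hdvd : p ∣ n)
    (hinv : IsUnit (p : A)) :
    (∃! Q : Polynomial A, Q.Monic ∧ (P - Q ^ p).degree < ((n - n / p : ℕ) : WithBot ℕ)) ∧
      ∀ Q : Polynomial A, Q.Monic → (P - Q ^ p).degree < ((n - n / p : ℕ) : WithBot ℕ) →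
        Q.natDegree = n / p := by
  obtain ⟨q, rfl⟩ : ∃ q, p = q + 1 := ⟨p - 1, by omega⟩
  obtain ⟨t1, ht1⟩ := hinv.exists_right_inv
  have hm : 1 ≤ n / (q + 1) := (Nat.one_le_div_iff hp).mpr (Nat.le_of_dvd hn hdvd)
  have hn' : (q + 1) * (n / (q + 1)) = n := Nat.mul_div_cancel' hdvd
  constructor
  · obtain ⟨Q, hQ, hQd, hlt⟩ := approx_exists P (n / (q + 1)) q t1 ht1 hm hP
      (by rw [hn', hdeg]) (n / (q + 1)) le_rfl
    rw [hn'] at hlt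
    exact ⟨Q, ⟨hQ, hlt⟩, fun Q' hQ' =>
      approx_unique P n (q + 1) hP hdeg hn hp hdvd hinv Q' Q hQ'.1 hQ hQ'.2 hlt⟩
  · exact fun Q hQ h => approx_deg P n (q + 1) hP hdeg hn hp Q hQ h
end

section
/- Let A be an integral domain, let P = Y^n + α₁Y^{n−1} + ⋯ + α_n and P' = Y^n + α'₁Y^{n−1} + ⋯ + α'_n be monic polynomials of degree n ≥ 1 in A[Y], and let p be a positive divisor of n whose image in A is invertible. If α_i = α'_i for all 1 ≤ i ≤ n/p, then √[p]{P} = √[p]{P'}, i.e. the p-th approximate root of P depends only on the coefficients α₁, …, α_{n/p}. -/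
open Polynomial Finset


/-- `Q` is the `p`-th approximate root of `P`: `Q` is monic of degree `deg P / p` and
`deg (P - Q ^ p) < deg P - deg P / p`. -/
def IsApproxRoot {A : Type*} [CommRing A] (P Q : Polynomial A) (p : ℕ) : Prop :=
  Q.Monic ∧ Q.natDegree = P.natDegree / p ∧
    (P - Q ^ p).degree < ((P.natDegree - P.natDegree / p : ℕ) : WithBot ℕ)

/-- The `p`-th approximate root of a monic polynomial `P = Y^n + α₁ Y^(n-1) + ⋯ + αₙ`
depends only on the coefficients `α₁, …, α_{n/p}`:  if `P` and `P'` are monic of degree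
`n ≥ 1`, `p` is a positive divisor of `n` invertible in `A`, and the coefficients of
`Y^(n-i)` in `P` and `P'` agree for `1 ≤ i ≤ n / p`, then the approximate roots agree. -/
theorem stmt_1 {A : Type*} [CommRing A] [IsDomain A] (P P' : Polynomial A) (n p : ℕ)
    (hP : P.Monic) (hP' : P'.Monic) (hdeg : P.natDegree = n) (hdeg' : P'.natDegree = n)
    (hn : 1 ≤ n) (hp : 0 < p) (hdvd : p ∣ n) (hinv : IsUnit (p : A))
    (hcoeff : ∀ i, 1 ≤ i → i ≤ n / p → P.coeff (n - i) = P'.coeff (n - i)) :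
    ∀ Q Q' : Polynomial A, IsApproxRoot P Q p → IsApproxRoot P' Q' p → Q = Q' := by
  rintro Q Q' ⟨hQm, hQd, hQlt⟩ ⟨hQ'm, hQ'd, hQ'lt⟩
  rw [hdeg] at hQd hQlt
  rw [hdeg'] at hQ'd hQ'lt
  set m := n / p with hm
  have hmn : m ≤ n := Nat.div_le_self n p
  have hpm : p * m = n := Nat.mul_div_cancel' hdvd
  -- degree of P - P'
  have hdPP' : (P - P').degree < ((n - m : ℕ) : WithBot ℕ) := by
    rw [Polynomial.degree_lt_iff_coeff_zero]
    intro k hk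
    have hk' : n - m ≤ k := by exact_mod_cast hk
    simp only [Polynomial.coeff_sub]
    rcases lt_trichotomy k n with h | h | h
    · have h1 : 1 ≤ n - k := by omega
      have h2 : n - k ≤ m := by omega
      have hkk : n - (n - k) = k := by omega
      have := hcoeff (n - k) h1 h2
      rw [hkk] at this
      rw [this, sub_self]
    · subst h
      rw [← hdeg, hP.coeff_natDegree, hdeg, ← hdeg', hP'.coeff_natDegree, sub_self]
    · rw [Polynomial.coeff_eq_zero_of_natDegree_lt (by omega),
        Polynomial.coeff_eq_zero_of_natDegree_lt (by omega), sub_self]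
  have key : (Q ^ p - Q' ^ p).degree < ((n - m : ℕ) : WithBot ℕ) := by
    have h1 : Q ^ p - Q' ^ p = (P' - Q' ^ p) - (P - Q ^ p) + (P - P') := by ring
    rw [h1]
    refine lt_of_le_of_lt (Polynomial.degree_add_le _ _) (max_lt ?_ hdPP')
    exact lt_of_le_of_lt (Polynomial.degree_sub_le _ _) (max_lt hQ'lt hQlt)
  by_contra hne
  have hQQ' : Q - Q' ≠ 0 := sub_ne_zero.mpr hne
  set S : Polynomial A := ∑ i ∈ range p, Q ^ i * Q' ^ (p - 1 - i) with hS
  have hgeo : S * (Q - Q') = Q ^ p - Q' ^ p := geom_sum₂_mul Q Q' p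
  -- coefficient of S at (p-1)*m is p
  have hterm : ∀ i ∈ range p, (Q ^ i * Q' ^ (p - 1 - i)).coeff ((p - 1) * m) = 1 := by
    intro i hi
    rw [mem_range] at hi
    have hmon : (Q ^ i * Q' ^ (p - 1 - i)).Monic := (hQm.pow i).mul (hQ'm.pow _)
    have hd : (Q ^ i * Q' ^ (p - 1 - i)).natDegree = (p - 1) * m := by
      rw [(hQm.pow i).natDegree_mul (hQ'm.pow _), hQm.natDegree_pow, hQ'm.natDegree_pow,
        hQd, hQ'd, ← Nat.add_mul]
      congr 1
      omega
    rw [← hd]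
    exact hmon.coeff_natDegree
  have hScoeff : S.coeff ((p - 1) * m) = (p : A) := by
    rw [hS, Polynomial.finset_sum_coeff, Finset.sum_congr rfl hterm]
    simp
  have hSne : S.coeff ((p - 1) * m) ≠ 0 := by
    rw [hScoeff]
    exact hinv.ne_zero
  have hSdeg : ((p - 1) * m : ℕ) ≤ S.degree := Polynomial.le_degree_of_ne_zero hSne
  have h0 : (0 : WithBot ℕ) ≤ (Q - Q').degree := Polynomial.zero_le_degree_iff.mpr hQQ'
  have hprod : ((n - m : ℕ) : WithBot ℕ) ≤ (S * (Q - Q')).degree := by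
    rw [Polynomial.degree_mul]
    have : ((n - m : ℕ) : WithBot ℕ) = ((p - 1) * m : ℕ) + (0 : WithBot ℕ) := by
      rw [add_zero]
      congr 1
      have : (p - 1) * m = p * m - m := by rw [Nat.sub_mul, one_mul]
      omega
    rw [this]
    exact add_le_add hSdeg h0
  rw [hgeo] at hprod
  exact absurd (lt_of_le_of_lt hprod key) (lt_irrefl _)
end

section
/- Let A be an integral domain, P ∈ A[Y] monic of degree n ≥ 1, and let p, q be positive integers whose images in A are invertible and such that pq divides n. Then √[q]{√[p]{P}} = √[pq]{P}. -/
open Polynomial Finset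

namespace Polynomial

section CommRing

variable {A : Type*} [CommRing A] {U V : A[X]}

theorem Monic.geom_sum₂_term (hU : U.Monic) (hV : V.Monic) (hUV : U.natDegree = V.natDegree)
    {m i : ℕ} (hi : i < m) :
    (U ^ i * V ^ (m - 1 - i)).Monic ∧
      (U ^ i * V ^ (m - 1 - i)).natDegree = (m - 1) * U.natDegree := by
  refine ⟨(hU.pow i).mul (hV.pow _), ?_⟩
  rw [(hU.pow i).natDegree_mul (hV.pow _), hU.natDegree_pow, hV.natDegree_pow, ← hUV,
    ← Nat.add_mul]
  congr 1
  omega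

theorem Monic.degree_geom_sum₂_le (hU : U.Monic) (hV : V.Monic)
    (hUV : U.natDegree = V.natDegree) (m : ℕ) :
    (∑ i ∈ range m, U ^ i * V ^ (m - 1 - i)).degree ≤ ((m - 1) * U.natDegree : ℕ) :=
  degree_le_of_natDegree_le <| natDegree_sum_le_of_forall_le _ _ fun _ hi =>
    (hU.geom_sum₂_term hV hUV (mem_range.mp hi)).2.le

theorem Monic.coeff_geom_sum₂ (hU : U.Monic) (hV : V.Monic) (hUV : U.natDegree = V.natDegree)
    (m : ℕ) :
    (∑ i ∈ range m, U ^ i * V ^ (m - 1 - i)).coeff ((m - 1) * U.natDegree) = m := by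
  rw [finsetSum_coeff, Finset.sum_congr rfl fun i hi => ?_, sum_const, card_range,
    nsmul_one]
  obtain ⟨hmonic, hdeg⟩ := hU.geom_sum₂_term hV hUV (mem_range.mp hi)
  rw [← hdeg, hmonic.coeff_natDegree]

theorem Monic.degree_pow_sub_pow_le (hU : U.Monic) (hV : V.Monic)
    (hUV : U.natDegree = V.natDegree) (m : ℕ) :
    (U ^ m - V ^ m).degree ≤ ((m - 1) * U.natDegree : ℕ) + (U - V).degree := by
  rw [← geom_sum₂_mul]
  exact degree_mul_le_of_le (hU.degree_geom_sum₂_le hV hUV m) le_rfl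

end CommRing

theorem Monic.degree_pow_sub_pow {A : Type*} [CommRing A] [NoZeroDivisors A] {U V : A[X]}
    (hU : U.Monic) (hV : V.Monic) (hUV : U.natDegree = V.natDegree) {m : ℕ}
    (hm : (m : A) ≠ 0) :
    (U ^ m - V ^ m).degree = ((m - 1) * U.natDegree : ℕ) + (U - V).degree := by
  rw [← geom_sum₂_mul, Polynomial.degree_mul,
    degree_eq_of_le_of_coeff_ne_zero (hU.degree_geom_sum₂_le hV hUV m)
      (by rwa [hU.coeff_geom_sum₂ hV hUV m])]

end Polynomial

section ApproxRoot

variable {A : Type*} [CommRing A] {P Q R S : A[X]} {m p q d : ℕ}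

theorem isApproxRoot_iff_of_natDegree_eq_mul (hP : P.natDegree = m * d) (hm : m ≠ 0) :
    IsApproxRoot P Q m ↔
      Q.Monic ∧ Q.natDegree = d ∧ (P - Q ^ m).degree < ((m - 1) * d : ℕ) := by
  rw [IsApproxRoot, hP, Nat.mul_div_cancel_left _ (Nat.pos_of_ne_zero hm), Nat.sub_one_mul]

theorem IsApproxRoot.trans (hQ : IsApproxRoot P Q p) (hR : IsApproxRoot Q R q)
    (hp : p ≠ 0) (hq : q ≠ 0) (hdvd : p * q ∣ P.natDegree) : IsApproxRoot P R (p * q) := by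
  obtain ⟨d, hd⟩ := hdvd
  obtain ⟨hQm, hQd, hPQ⟩ :=
    (isApproxRoot_iff_of_natDegree_eq_mul (hd.trans (mul_assoc p q d)) hp).mp hQ
  obtain ⟨hRm, hRd, hQR⟩ := (isApproxRoot_iff_of_natDegree_eq_mul hQd hq).mp hR
  refine (isApproxRoot_iff_of_natDegree_eq_mul hd (mul_ne_zero hp hq)).mpr ⟨hRm, hRd, ?_⟩
  have hRq : (R ^ q).natDegree = q * d := by rw [hRm.natDegree_pow, hRd, mul_comm]
  have hexp : (p - 1) * (q * d) + (q - 1) * d = (p * q - 1) * d := by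
    have : 1 ≤ p * q := Nat.one_le_iff_ne_zero.mpr (mul_ne_zero hp hq)
    zify [Nat.one_le_iff_ne_zero.mpr hp, Nat.one_le_iff_ne_zero.mpr hq, this]
    ring
  have hpow : (Q ^ p - (R ^ q) ^ p).degree < ((p * q - 1) * d : ℕ) :=
    calc (Q ^ p - (R ^ q) ^ p).degree
        ≤ ((p - 1) * Q.natDegree : ℕ) + (Q - R ^ q).degree :=
          hQm.degree_pow_sub_pow_le (hRm.pow q) (hQd.trans hRq.symm) p
      _ < ((p - 1) * (q * d) : ℕ) + ((q - 1) * d : ℕ) := by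
          rw [hQd]; exact WithBot.add_lt_add_left WithBot.coe_ne_bot hQR
      _ = ((p * q - 1) * d : ℕ) := by rw [← hexp, Nat.cast_add]
  have hPQ' : (P - Q ^ p).degree < ((p * q - 1) * d : ℕ) :=
    hPQ.trans_le (WithBot.coe_le_coe.mpr (hexp ▸ Nat.le_add_right _ _))
  rw [show P - R ^ (p * q) = (P - Q ^ p) + (Q ^ p - (R ^ q) ^ p) by ring]
  exact (degree_add_le _ _).trans_lt (max_lt hPQ' hpow)

theorem IsApproxRoot.unique [NoZeroDivisors A] (hR : IsApproxRoot P R m)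
    (hS : IsApproxRoot P S m) (hm : (m : A) ≠ 0) (hdvd : m ∣ P.natDegree) : R = S := by
  obtain ⟨d, hd⟩ := hdvd
  have hm₀ : m ≠ 0 := by rintro rfl; exact hm Nat.cast_zero
  obtain ⟨hRm, hRd, hPR⟩ := (isApproxRoot_iff_of_natDegree_eq_mul hd hm₀).mp hR
  obtain ⟨hSm, hSd, hPS⟩ := (isApproxRoot_iff_of_natDegree_eq_mul hd hm₀).mp hS
  have hlt : (((m - 1) * d : ℕ) : WithBot ℕ) + (R - S).degree < ((m - 1) * d : ℕ) + 0 := by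
    rw [add_zero, ← hRd, ← hRm.degree_pow_sub_pow hSm (hRd.trans hSd.symm) hm, hRd,
      show R ^ m - S ^ m = (P - S ^ m) - (P - R ^ m) by ring]
    exact (degree_sub_le _ _).trans_lt (max_lt hPS hPR)
  have hRS := (WithBot.add_lt_add_iff_left WithBot.coe_ne_bot).mp hlt
  rwa [Nat.WithBot.lt_zero_iff, degree_eq_bot, sub_eq_zero] at hRS

end ApproxRoot

theorem stmt_2_general {A : Type*} [CommRing A] [IsDomain A] (P : Polynomial A) (n p q : ℕ)
    (hdeg : P.natDegree = n) (hp : 0 < p) (hq : 0 < q)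
    (hinvp : IsUnit (p : A)) (hinvq : IsUnit (q : A)) (hdvd : p * q ∣ n) :
    ∀ Q R S : Polynomial A, IsApproxRoot P Q p → IsApproxRoot Q R q →
      IsApproxRoot P S (p * q) → R = S := by
  intro Q R S hQ hR hS
  rw [← hdeg] at hdvd
  refine (hQ.trans hR hp.ne' hq.ne' hdvd).unique hS ?_ hdvd
  exact_mod_cast (hinvp.mul hinvq).ne_zero

/-- **Composition of approximate roots** : `√[q]{√[p]{P}} = √[pq]{P}`.  If `P` is monic of
degree `n ≥ 1` over an integral domain `A`, and `p, q` are positive integers invertible in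
`A` with `p * q ∣ n`, then the `q`-th approximate root of the `p`-th approximate root of `P`
is the `(p*q)`-th approximate root of `P`. -/
theorem stmt_2 {A : Type*} [CommRing A] [IsDomain A] (P : Polynomial A) (n p q : ℕ)
    (hP : P.Monic) (hdeg : P.natDegree = n) (hn : 1 ≤ n) (hp : 0 < p) (hq : 0 < q)
    (hinvp : IsUnit (p : A)) (hinvq : IsUnit (q : A)) (hdvd : p * q ∣ n) :
    ∀ Q R S : Polynomial A, IsApproxRoot P Q p → IsApproxRoot Q R q →
      IsApproxRoot P S (p * q) → R = S :=
  stmt_2_general P n p q hdeg hp hq hinvp hinvq hdvd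
end

section
/- Let A be an integral domain, P ∈ A[Y] monic of degree n ≥ 1, and p a positive divisor of n whose image in A is invertible. Then for every monic polynomial Q ∈ A[Y] of degree n/p, applying the Tschirnhausen operator τ_P to Q exactly n/p times yields the p-th approximate root: τ_P∘τ_P∘⋯∘τ_P (n/p times) applied to Q equals √[p]{P}. -/
open scoped Classical

/-- The coefficient `a_i` of `Q^(s-i)` in the `Q`-adic expansion
`P = a₀ Q^s + a₁ Q^(s-1) + ⋯ + a_s` of `P`, where `s = ⌊deg P / deg Q⌋`.  (When `Q` is
monic of positive degree this expansion exists and is unique, so the choice below picks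
out the actual expansion.) -/
noncomputable def adicCoeff {A : Type*} [CommRing A] (P Q : Polynomial A) (i : ℕ) :
    Polynomial A :=
  if h : ∃ a : ℕ → Polynomial A, (∀ j, (a j).degree < Q.degree) ∧
      P = ∑ j ∈ Finset.range (P.natDegree / Q.natDegree + 1),
        a j * Q ^ (P.natDegree / Q.natDegree - j)
  then h.choose i else 0

/-- The Tschirnhausen operator `τ_P (Q) = Q + (1/s) a₁`, where `a₁` is the coefficient of
`Q^(s-1)` in the `Q`-adic expansion of `P` and `s = deg P / deg Q`. -/
noncomputable def tau {A : Type*} [CommRing A] (P Q : Polynomial A) : Polynomial A :=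
  Q + Polynomial.C (Ring.inverse ((P.natDegree / Q.natDegree : ℕ) : A)) * adicCoeff P Q 1

/-!
Write `d = deg Q` and `P - Q ^ p = r_{p-1} Q^{p-1} + ⋯ + r_0` in `Q`-adic digits, so that
`a₁ = r_{p-1}` and `τ_P Q = Q + c` with `p c = r_{p-1}`. In the binomial expansion of
`(Q + c) ^ p` the term `p c Q^{p-1}` cancels the top digit of `P - Q ^ p`; what is left of
`P - (Q + c) ^ p` is the lower digits, of degree `< n - d`, and the terms `c^i Q^{p-i}` with
`i ≥ 2`, of degree at most `n - 2 (d - deg c)`. Hence if `deg (P - Q ^ p) < n - k` with `k < d`,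
then `deg c < d - k` and `deg (P - (τ_P Q) ^ p) < n - k - 1`. Starting from `k = 0`
(`P` and `Q ^ p` are monic of degree `n`), `d` steps reach `deg (P - Q ^ p) < n - d`.
-/

open Polynomial Finset

section
variable {A : Type*} [CommRing A]

theorem degree_adicCoeff_lt (P : A[X]) {Q : A[X]} (hQ : Q ≠ 0) (i : ℕ) :
    (adicCoeff P Q i).degree < Q.degree := by
  unfold adicCoeff
  split_ifs with h
  · exact h.choose_spec.1 i
  · rw [degree_zero]; exact bot_lt_iff_ne_bot.mpr (degree_ne_bot.mpr hQ)

theorem degree_tau_sub_lt (P : A[X]) {Q : A[X]} (hQ : Q ≠ 0) :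
    (tau P Q - Q).degree < Q.degree := by
  rw [tau, add_sub_cancel_left, ← smul_eq_C_mul]
  exact (degree_smul_le _ _).trans_lt (degree_adicCoeff_lt P hQ 1)

theorem monic_tau [Nontrivial A] (P : A[X]) {Q : A[X]} (hQ : Q.Monic) :
    (tau P Q).Monic := by
  simpa using hQ.add_of_left (degree_tau_sub_lt P hQ.ne_zero)

theorem natDegree_tau (P : A[X]) {Q : A[X]} (hQ : Q ≠ 0) :
    (tau P Q).natDegree = Q.natDegree := by
  simpa using natDegree_add_eq_left_of_degree_lt (degree_tau_sub_lt P hQ)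

theorem degree_add_pow_sub_lt {Q c : A[X]} {m : ℕ} (hm : 0 < m)
    (hc : c.natDegree + m ≤ Q.natDegree) (p : ℕ) :
    ((Q + c) ^ p - Q ^ p - p * c * Q ^ (p - 1)).degree
      < ((p * Q.natDegree - m : ℕ) : WithBot ℕ) := by
  rcases p with _ | q
  · simp
  have hexp : (Q + c) ^ (q + 1) - Q ^ (q + 1) - ((q + 1 : ℕ) : A[X]) * c * Q ^ (q + 1 - 1)
      = ∑ i ∈ range q,
          c ^ (i + 2) * Q ^ (q + 1 - (i + 2)) * C ((q + 1).choose (i + 2) : A) := by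
    rw [add_comm Q, add_pow, sum_range_succ', sum_range_succ']
    simp only [zero_add, Nat.choose_one_right, Nat.choose_zero_right, map_natCast]
    push_cast
    ring
  rw [hexp]
  refine (degree_sum_le _ _).trans_lt ((Finset.sup_lt_iff (WithBot.bot_lt_coe _)).mpr
    fun i hi => degree_le_natDegree.trans_lt (Nat.cast_lt.mpr ?_))
  obtain ⟨N, hN⟩ : ∃ N, q + 1 = (i + 2) + N := ⟨q + 1 - (i + 2), by simp at hi; omega⟩
  have h1 : (i + 2) * c.natDegree + (i + 2) * m ≤ (i + 2) * Q.natDegree := by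
    rw [← mul_add]; exact Nat.mul_le_mul_left _ hc
  have h2 : 2 * m ≤ (i + 2) * m := Nat.mul_le_mul_right _ (by omega)
  rw [hN, Nat.add_sub_cancel_left]
  calc _ ≤ (c ^ (i + 2) * Q ^ N).natDegree := natDegree_mul_C_le _ _
    _ ≤ (i + 2) * c.natDegree + N * Q.natDegree :=
      natDegree_mul_le.trans (add_le_add natDegree_pow_le natDegree_pow_le)
    _ < (i + 2 + N) * Q.natDegree - m := by rw [Nat.add_mul (i + 2) N]; omega

end

section
variable {A : Type*} [CommRing A] [Nontrivial A]

theorem le_degree_mul_pow {Q e : A[X]} (hQ : Q.Monic) (he : e ≠ 0) (t : ℕ) :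
    ((t * Q.natDegree : ℕ) : WithBot ℕ) ≤ (e * Q ^ t).degree := by
  rw [(hQ.pow t).degree_mul, degree_eq_natDegree (hQ.pow t).ne_zero, hQ.natDegree_pow]
  exact le_add_of_nonneg_left (zero_le_degree_iff.mpr he)

theorem degree_sum_mul_pow_lt {Q : A[X]} (hQ : Q.Monic) {c : ℕ → A[X]} {t : ℕ}
    (hc : ∀ j < t, (c j).degree < Q.degree) :
    (∑ j ∈ range t, c j * Q ^ j).degree < ((t * Q.natDegree : ℕ) : WithBot ℕ) := by
  induction t with
  | zero => simp
  | succ t ih =>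
    rw [sum_range_succ]
    refine (degree_add_le _ _).trans_lt (max_lt ?_ ?_)
    · exact (ih fun j hj => hc j (by omega)).trans_le (by gcongr; omega)
    · rw [(hQ.pow t).degree_mul, degree_eq_natDegree (hQ.pow t).ne_zero, hQ.natDegree_pow,
        add_mul, one_mul, Nat.cast_add, add_comm _ ((Q.natDegree : ℕ) : WithBot ℕ)]
      have := hc t (by omega)
      rw [degree_eq_natDegree hQ.ne_zero] at this
      exact WithBot.add_lt_add_right WithBot.coe_ne_bot this

theorem eq_zero_of_sum_mul_pow_eq_zero {Q : A[X]} (hQ : Q.Monic) {e : ℕ → A[X]} {t : ℕ}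
    (he : ∀ j < t, (e j).degree < Q.degree) (h : ∑ j ∈ range t, e j * Q ^ j = 0) :
    ∀ j < t, e j = 0 := by
  induction t with
  | zero => simp
  | succ t ih =>
    rw [sum_range_succ, add_eq_zero_iff_eq_neg'] at h
    have het : e t = 0 := by
      by_contra hne
      have hlow := degree_sum_mul_pow_lt (t := t) hQ (fun j hj => he j (by omega))
      have := le_degree_mul_pow hQ hne t
      rw [h, degree_neg] at this
      exact this.not_gt hlow
    rw [het, zero_mul, eq_comm, neg_eq_zero] at h
    intro j hj
    rcases Nat.lt_succ_iff_lt_or_eq.mp hj with hj | rfl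
    · exact ih (fun j hj => he j (by omega)) h j hj
    · exact het

theorem eq_of_sum_mul_pow_eq {Q : A[X]} (hQ : Q.Monic) {c c' : ℕ → A[X]} {t : ℕ}
    (hc : ∀ j < t, (c j).degree < Q.degree) (hc' : ∀ j < t, (c' j).degree < Q.degree)
    (h : ∑ j ∈ range t, c j * Q ^ j = ∑ j ∈ range t, c' j * Q ^ j) :
    ∀ j < t, c j = c' j := by
  have hdiff := eq_zero_of_sum_mul_pow_eq_zero hQ (e := c - c')
    (fun j hj => (degree_sub_le _ _).trans_lt (max_lt (hc j hj) (hc' j hj)))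
    (by simp only [Pi.sub_apply, sub_mul, sum_sub_distrib, h, sub_self])
  exact fun j hj => sub_eq_zero.mp (hdiff j hj)

theorem exists_sum_mul_pow_eq {Q : A[X]} (hQ : Q.Monic) {t : ℕ} {R : A[X]}
    (hR : R.degree < ((t * Q.natDegree : ℕ) : WithBot ℕ)) :
    ∃ r : ℕ → A[X], (∀ j, (r j).degree < Q.degree) ∧
      R = ∑ j ∈ range t, r j * Q ^ j := by
  have hQ0 : (0 : A[X]).degree < Q.degree := by
    rw [degree_zero]; exact bot_lt_iff_ne_bot.mpr (degree_ne_bot.mpr hQ.ne_zero)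
  induction t generalizing R with
  | zero =>
    rw [zero_mul, Nat.cast_zero, Nat.WithBot.lt_zero_iff, degree_eq_bot] at hR
    exact ⟨0, fun _ => hQ0, by simp [hR]⟩
  | succ t ih =>
    have hq : (R /ₘ Q).degree < ((t * Q.natDegree : ℕ) : WithBot ℕ) := by
      have h : (R /ₘ Q * Q).degree < (((t + 1) * Q.natDegree : ℕ) : WithBot ℕ) := by
        rw [mul_comm, eq_sub_of_add_eq' (modByMonic_add_div R Q)]
        refine (degree_sub_le _ _).trans_lt (max_lt hR ((degree_modByMonic_lt R hQ).trans_le ?_))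
        rw [degree_eq_natDegree hQ.ne_zero]
        exact_mod_cast Nat.le_mul_of_pos_left _ t.succ_pos
      rw [hQ.degree_mul, degree_eq_natDegree hQ.ne_zero, add_mul, one_mul, Nat.cast_add] at h
      exact lt_of_add_lt_add_right h
    obtain ⟨r, hr, hRr⟩ := ih hq
    refine ⟨fun | 0 => R %ₘ Q | j + 1 => r j,
      fun | 0 => degree_modByMonic_lt R hQ | j + 1 => hr j, ?_⟩
    calc R = R %ₘ Q + Q * (R /ₘ Q) := (modByMonic_add_div R Q).symm
      _ = _ := by
        rw [hRr, mul_sum, sum_range_succ', pow_zero, mul_one, add_comm]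
        exact congrArg (· + _) (sum_congr rfl fun j _ => by ring)

theorem adicCoeff_eq {P Q : A[X]} (hQ : Q.Monic) {s : ℕ} (hs : P.natDegree / Q.natDegree = s)
    {b : ℕ → A[X]} (hb : ∀ j, (b j).degree < Q.degree)
    (hP : P = ∑ j ∈ range (s + 1), b j * Q ^ j) {i : ℕ} (hi : i ≤ s) :
    adicCoeff P Q i = b (s - i) := by
  have hex : ∃ a : ℕ → A[X], (∀ j, (a j).degree < Q.degree) ∧
      P = ∑ j ∈ range (P.natDegree / Q.natDegree + 1),
        a j * Q ^ (P.natDegree / Q.natDegree - j) :=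
    ⟨fun j => b (s - j), fun j => hb _, by rw [hs, sum_flip (fun j => b j * Q ^ j)]; exact hP⟩
  rw [adicCoeff, dif_pos hex]
  obtain ⟨ha, hPa⟩ := hex.choose_spec
  set a := hex.choose
  have hPa' : P = ∑ j ∈ range (s + 1), a (s - j) * Q ^ j := by
    rw [hPa, hs, ← sum_flip (fun j => a (s - j) * Q ^ j)]
    refine sum_congr rfl fun j hj => ?_
    rw [Nat.sub_sub_self (Nat.lt_succ_iff.mp (mem_range.mp hj))]
  have := eq_of_sum_mul_pow_eq hQ (fun j _ => ha _) (fun j _ => hb j) (hPa'.symm.trans hP)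
    (s - i) (by omega)
  rwa [Nat.sub_sub_self hi] at this

theorem natDegree_add_lt_of_degree_sum_mul_pow_lt {Q : A[X]} (hQ : Q.Monic) {r : ℕ → A[X]}
    (hr : ∀ j, (r j).degree < Q.degree) {q k : ℕ} (hk : k < Q.natDegree)
    (hdeg : (∑ j ∈ range (q + 1), r j * Q ^ j).degree
      < (((q + 1) * Q.natDegree - k : ℕ) : WithBot ℕ)) :
    (r q).natDegree + k < Q.natDegree := by
  rcases eq_or_ne (r q) 0 with h0 | h0
  · rwa [h0, natDegree_zero, zero_add]
  have hlow := degree_sum_mul_pow_lt (t := q) hQ fun j _ => hr j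
  have htop : (r q * Q ^ q).degree < (((q + 1) * Q.natDegree - k : ℕ) : WithBot ℕ) := by
    rw [show r q * Q ^ q = ∑ j ∈ range (q + 1), r j * Q ^ j - ∑ j ∈ range q, r j * Q ^ j by
      rw [sum_range_succ]; ring]
    refine (degree_sub_le _ _).trans_lt (max_lt hdeg (hlow.trans_le ?_))
    exact_mod_cast (by rw [add_mul, one_mul]; omega)
  rw [(hQ.pow q).degree_mul, degree_eq_natDegree h0, degree_eq_natDegree (hQ.pow q).ne_zero,
    hQ.natDegree_pow] at htop
  have : (r q).natDegree + q * Q.natDegree < (q + 1) * Q.natDegree - k := by exact_mod_cast htop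
  rw [add_mul, one_mul] at this
  omega

theorem adicCoeff_one_eq_of_sub_pow_eq {P Q : A[X]} (hQ : Q.Monic) (hQ0 : 0 < Q.natDegree)
    {q : ℕ} (hs : P.natDegree / Q.natDegree = q + 1) {r : ℕ → A[X]}
    (hr : ∀ j, (r j).degree < Q.degree)
    (hR : P - Q ^ (q + 1) = ∑ j ∈ range (q + 1), r j * Q ^ j) :
    adicCoeff P Q 1 = r q := by
  have hb : ∀ j, (Function.update r (q + 1) 1 j).degree < Q.degree := by
    intro j
    rcases eq_or_ne j (q + 1) with rfl | hj
    · rw [Function.update_self, degree_one, degree_eq_natDegree hQ.ne_zero]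
      exact_mod_cast hQ0
    · rw [Function.update_of_ne hj]; exact hr j
  have hsum : ∑ j ∈ range (q + 1), Function.update r (q + 1) 1 j * Q ^ j = P - Q ^ (q + 1) := by
    rw [hR]
    exact sum_congr rfl fun j hj => by rw [Function.update_of_ne (by simp at hj; omega)]
  have := adicCoeff_eq hQ hs hb (by rw [sum_range_succ, hsum, Function.update_self]; ring)
    (i := 1) (by omega)
  rwa [Nat.add_sub_cancel, Function.update_of_ne (Nat.lt_succ_self q).ne] at this

theorem degree_sub_tau_pow_lt {P Q : A[X]} (hQ : Q.Monic) {p k : ℕ} (hp : 0 < p)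
    (hinv : IsUnit (p : A)) (hP : P.natDegree = p * Q.natDegree) (hk : k < Q.natDegree)
    (hPQ : (P - Q ^ p).degree < ((p * Q.natDegree - k : ℕ) : WithBot ℕ)) :
    (P - tau P Q ^ p).degree < ((p * Q.natDegree - (k + 1) : ℕ) : WithBot ℕ) := by
  obtain ⟨r, hr, hR⟩ :=
    exists_sum_mul_pow_eq hQ (hPQ.trans_le (by exact_mod_cast Nat.sub_le _ _))
  obtain ⟨q, rfl⟩ : ∃ q, p = q + 1 := ⟨p - 1, by omega⟩
  have hs : P.natDegree / Q.natDegree = q + 1 := by rw [hP, Nat.mul_div_cancel _ (by omega)]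
  set c := C (Ring.inverse ((q + 1 : ℕ) : A)) * r q
  have htau : tau P Q = Q + c := by
    rw [tau, hs, adicCoeff_one_eq_of_sub_pow_eq hQ (by omega) hs hr hR]
  have hpc : ((q + 1 : ℕ) : A[X]) * c = r q := by
    rw [← C_eq_natCast, ← mul_assoc, ← C_mul, Ring.mul_inverse_cancel _ hinv, C_1, one_mul]
  have hc : c.natDegree + (k + 1) ≤ Q.natDegree :=
    (Nat.add_le_add_right (natDegree_C_mul_le _ _) _).trans
      (natDegree_add_lt_of_degree_sum_mul_pow_lt hQ hr hk (hR ▸ hPQ))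
  set T := ∑ j ∈ range q, r j * Q ^ j
  have hT : T.degree < ((q * Q.natDegree : ℕ) : WithBot ℕ) :=
    degree_sum_mul_pow_lt hQ fun j _ => hr j
  have hdiff : P - tau P Q ^ (q + 1)
      = T - ((Q + c) ^ (q + 1) - Q ^ (q + 1) - ((q + 1 : ℕ) : A[X]) * c * Q ^ (q + 1 - 1)) := by
    rw [sum_range_succ] at hR
    rw [htau, Nat.add_sub_cancel]
    linear_combination hR - Q ^ q * hpc
  rw [hdiff]
  refine (degree_sub_le _ _).trans_lt
    (max_lt (hT.trans_le ?_) (degree_add_pow_sub_lt k.succ_pos hc _))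
  exact_mod_cast (by rw [add_mul, one_mul]; omega)

theorem monic_tau_iterate (P : A[X]) {Q : A[X]} (hQ : Q.Monic) (k : ℕ) :
    ((tau P)^[k] Q).Monic := by
  induction k with
  | zero => exact hQ
  | succ k ih => rw [Function.iterate_succ_apply']; exact monic_tau P ih

theorem natDegree_tau_iterate (P : A[X]) {Q : A[X]} (hQ : Q.Monic) (k : ℕ) :
    ((tau P)^[k] Q).natDegree = Q.natDegree := by
  induction k with
  | zero => rfl
  | succ k ih =>
    rw [Function.iterate_succ_apply', natDegree_tau P (monic_tau_iterate P hQ k).ne_zero, ih]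

theorem degree_sub_tau_iterate_pow_lt {P Q : A[X]} (hP : P.Monic) (hQ : Q.Monic) {p : ℕ}
    (hp : 0 < p) (hinv : IsUnit (p : A)) (hdeg : P.natDegree = p * Q.natDegree) {k : ℕ}
    (hk : k ≤ Q.natDegree) :
    (P - ((tau P)^[k] Q) ^ p).degree < ((p * Q.natDegree - k : ℕ) : WithBot ℕ) := by
  induction k with
  | zero =>
    have hQp : (Q ^ p).degree = P.degree := by
      rw [degree_eq_natDegree (hQ.pow p).ne_zero, degree_eq_natDegree hP.ne_zero,
        hQ.natDegree_pow, hdeg]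
    have := degree_sub_lt_left hQp.symm hP.ne_zero
      (by rw [hP.leadingCoeff, (hQ.pow p).leadingCoeff])
    rwa [degree_eq_natDegree hP.ne_zero, hdeg] at this
  | succ k ih =>
    have hdegk := natDegree_tau_iterate P hQ k
    rw [Function.iterate_succ_apply', ← hdegk]
    exact degree_sub_tau_pow_lt (monic_tau_iterate P hQ k) hp hinv (by rw [hdegk, hdeg])
      (by omega) (by rw [hdegk]; exact ih (by omega))

end

theorem stmt_5_general {A : Type*} [CommRing A] [IsDomain A] (P : Polynomial A) (n p : ℕ)
    (hP : P.Monic) (hdeg : P.natDegree = n) (hp : 0 < p) (hdvd : p ∣ n)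
    (hinv : IsUnit (p : A)) (Q : Polynomial A) (hQ : Q.Monic) (hQdeg : Q.natDegree = n / p) :
    IsApproxRoot P ((tau P)^[n / p] Q) p := by
  obtain ⟨d, rfl⟩ := hdvd
  rw [Nat.mul_div_cancel_left d hp] at hQdeg ⊢
  subst hQdeg
  refine ⟨monic_tau_iterate P hQ _, ?_, ?_⟩
  · rw [natDegree_tau_iterate P hQ, hdeg, Nat.mul_div_cancel_left _ hp]
  · rw [hdeg, Nat.mul_div_cancel_left _ hp]
    exact degree_sub_tau_iterate_pow_lt hP hQ hp hinv hdeg le_rfl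

/-- **Computing approximate roots by iterating the Tschirnhausen operator.**
Let `P ∈ A[Y]` be monic of degree `n ≥ 1` over an integral domain and `p` a positive
divisor of `n` invertible in `A`.  Then for every monic `Q` of degree `n / p`, applying
`τ_P` exactly `n / p` times to `Q` yields the `p`-th approximate root of `P`. -/
theorem stmt_5 {A : Type*} [CommRing A] [IsDomain A] (P : Polynomial A) (n p : ℕ)
    (hP : P.Monic) (hdeg : P.natDegree = n) (hn : 1 ≤ n) (hp : 0 < p) (hdvd : p ∣ n)
    (hinv : IsUnit (p : A)) (Q : Polynomial A) (hQ : Q.Monic) (hQdeg : Q.natDegree = n / p) :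
    IsApproxRoot P ((tau P)^[n / p] Q) p :=
  stmt_5_general P n p hP hdeg hp hdvd hinv Q hQ hQdeg
end

section
/- With f, N, y(T) = Σ_{j≥1} a_jT^j and characteristic exponents B₀, B₁, …, B_G as in the setup, the set { ord_T( y(ωT) − y(ω′T) ) : ω, ω′ distinct complex N-th roots of unity } is equal to the set {B₁, …, B_G}, where ord_T denotes the T-adic order in ℂ[[T]]. -/
noncomputable section

/-- The substitution `X ↦ T ^ n` on formal power series, described coefficientwise:
the coefficient of `T ^ j` in `substPow n σ` is the coefficient of `X ^ (j / n)` in `σ`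
when `n ∣ j`, and `0` otherwise. -/
def substPow (n : ℕ) (σ : PowerSeries ℂ) : PowerSeries ℂ :=
  PowerSeries.mk fun j => if n ∣ j then PowerSeries.coeff (j / n) σ else 0

/-- The power series `φ (T ^ n, w (T))`, for `φ ∈ ℂ[[X]][Y]` and `w ∈ ℂ[[T]]`. -/
def evalCurve (n : ℕ) (w : PowerSeries ℂ) (φ : Polynomial (PowerSeries ℂ)) :
    PowerSeries ℂ :=
  ∑ i ∈ Finset.range (φ.natDegree + 1), substPow n (φ.coeff i) * w ^ i

/-- `X = T ^ n`, `Y = w (T)` is a primitive Newton–Puiseux parameterization of the curve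
defined by `q ∈ ℂ[[X]][Y]`: one has `q (T ^ n, w (T)) = 0`, `w` has zero constant term, and
`gcd ({n} ∪ {j : coeff j w ≠ 0}) = 1`. -/
def IsNPParam (q : Polynomial (PowerSeries ℂ)) (n : ℕ) (w : PowerSeries ℂ) : Prop :=
  evalCurve n w q = 0 ∧ PowerSeries.constantCoeff w = 0 ∧
    ∀ d : ℕ, d ∣ n → (∀ j, PowerSeries.coeff j w ≠ 0 → d ∣ j) → d = 1

/-- `B 0, B 1, …, B G` is the characteristic sequence of the primitive Newton–Puiseux
parameterization `X = T ^ n`, `Y = w (T)`:  `B 0 = n`; for `1 ≤ i ≤ G`, `B i` is the least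
exponent `j` of a nonzero term of `w` such that `gcd (B 0, …, B (i-1)) ∤ j`; and `G` is the
least index for which `gcd (B 0, …, B G) = 1`. -/
def IsCharSeq (n : ℕ) (w : PowerSeries ℂ) (G : ℕ) (B : ℕ → ℕ) : Prop :=
  B 0 = n ∧
    (∀ i, 1 ≤ i → i ≤ G →
      B i = sInf {j : ℕ | PowerSeries.coeff j w ≠ 0 ∧ ¬ (Finset.range i).gcd B ∣ j}) ∧
    (Finset.range (G + 1)).gcd B = 1 ∧ ∀ i < G, (Finset.range (i + 1)).gcd B ≠ 1

/-- `Ebar B i = gcd (B 0, …, B i)`, the sequence of greatest common divisors. -/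
def Ebar (B : ℕ → ℕ) (i : ℕ) : ℕ := (Finset.range (i + 1)).gcd B

/-- The generators of the semigroup:
`B̄ 0 = B 0` and `B̄ i = B i + Σ_{k=1}^{i-1} ((E (k-1) - E k) / E (i-1)) * B k` for `i ≥ 1`. -/
def Bbar (B : ℕ → ℕ) (i : ℕ) : ℕ :=
  if i = 0 then B 0
  else B i + ∑ k ∈ Finset.Ico 1 i, ((Ebar B (k - 1) - Ebar B k) / Ebar B (i - 1)) * B k

/-- `B̄ i` as an extended natural number, with the convention `B̄ (G + 1) = ∞`. -/
def BbarTop (G : ℕ) (B : ℕ → ℕ) (i : ℕ) : ℕ∞ :=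
  if i ≤ G then (Bbar B i : ℕ∞) else ⊤

/-- `q` is a `k`-semiroot of the branch parameterized by `X = T ^ N`, `Y = y (T)` with
characteristic sequence `B 0, …, B G`:  `q` is monic of `Y`-degree `N / E k` and the
intersection number `(f, q)`, i.e. the `T`-adic order of `q (T ^ N, y (T))`, equals
`B̄ (k+1)` (which is `∞` for `k = G`). -/
def IsSemiroot (N : ℕ) (y : PowerSeries ℂ) (G : ℕ) (B : ℕ → ℕ) (k : ℕ)
    (q : Polynomial (PowerSeries ℂ)) : Prop :=
  q.Monic ∧ q.natDegree = N / Ebar B k ∧ (evalCurve N y q).order = BbarTop G B (k + 1)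

/-! Write `S_d` for the exponents of the terms of `y` not divisible by `d`. For roots of unity
`ω ≠ ω'`, the coefficient of `T ^ j` in `y (ω T) - y (ω' T)` is `(ω ^ j - ω' ^ j) a_j`, which
vanishes exactly when `j ∉ S_d` with `d` the order of `ω / ω'`; so the order of the difference is
`min S_d`. As `d` runs over the divisors `≠ 1` of `N`, the value `min S_d` is `B (k + 1)` for the
first `k` with `d ∤ gcd (B 0, …, B (k + 1))`, because `S_d ⊆ S_{gcd (B 0, …, B k)}` and
`B (k + 1)` lies in both. Conversely `B (k + 1) = min S_d` for `d = gcd (B 0, …, B k)`, which is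
the order of a suitable `N`-th root of unity. -/

open PowerSeries

def supportNotDvd {R : Type*} [Semiring R] (w : R⟦X⟧) (d : ℕ) : Set ℕ :=
  {j | coeff j w ≠ 0 ∧ ¬ d ∣ j}

lemma supportNotDvd_mono {R : Type*} [Semiring R] (w : R⟦X⟧) {d e : ℕ} (hde : d ∣ e) :
    supportNotDvd w d ⊆ supportNotDvd w e :=
  fun _ ⟨hj, hdj⟩ => ⟨hj, fun hej => hdj (hde.trans hej)⟩

lemma supportNotDvd_nonempty {R : Type*} [Semiring R] {w : R⟦X⟧} {n d : ℕ}
    (hprim : ∀ d : ℕ, d ∣ n → (∀ j, coeff j w ≠ 0 → d ∣ j) → d = 1)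
    (hdn : d ∣ n) (hd : d ≠ 1) : (supportNotDvd w d).Nonempty := by
  by_contra hempty
  refine hd (hprim d hdn fun j hj => ?_)
  by_contra hdj
  exact hempty ⟨j, hj, hdj⟩

lemma pow_eq_pow_iff_orderOf_div_dvd {G₀ : Type*} [CommGroupWithZero G₀] {a b : G₀}
    (hb : b ≠ 0) (j : ℕ) : a ^ j = b ^ j ↔ orderOf (a / b) ∣ j := by
  rw [orderOf_dvd_iff_pow_eq_one, div_pow, div_eq_one_iff_eq (pow_ne_zero j hb)]

lemma coeff_rescale_sub_rescale_ne_zero_iff {K : Type*} [Field K] (w : K⟦X⟧) {ω ω' : K}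
    (hω' : ω' ≠ 0) (j : ℕ) :
    coeff j (rescale ω w - rescale ω' w) ≠ 0 ↔ j ∈ supportNotDvd w (orderOf (ω / ω')) := by
  rw [map_sub, coeff_rescale, coeff_rescale, ← sub_mul, mul_ne_zero_iff, sub_ne_zero,
    Ne, pow_eq_pow_iff_orderOf_div_dvd hω']
  exact and_comm

lemma order_rescale_sub_rescale {K : Type*} [Field K] (w : K⟦X⟧) {ω ω' : K} (hω' : ω' ≠ 0)
    (hne : (supportNotDvd w (orderOf (ω / ω'))).Nonempty) :
    (rescale ω w - rescale ω' w).order = (sInf (supportNotDvd w (orderOf (ω / ω'))) : ℕ) := by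
  rw [order_eq_nat, coeff_rescale_sub_rescale_ne_zero_iff w hω']
  refine ⟨Nat.sInf_mem hne, fun i hi => ?_⟩
  by_contra h
  exact Nat.notMem_of_lt_sInf hi ((coeff_rescale_sub_rescale_ne_zero_iff w hω' i).1 h)

namespace IsCharSeq

variable {n G : ℕ} {w : PowerSeries ℂ} {B : ℕ → ℕ}

lemma ebar_zero (hchar : IsCharSeq n w G B) : Ebar B 0 = n := by
  rw [Ebar, zero_add, Finset.range_one, Finset.gcd_singleton, hchar.1, normalize_eq]

lemma ebar_dvd (hchar : IsCharSeq n w G B) (k : ℕ) : Ebar B k ∣ n :=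
  hchar.1 ▸ Finset.gcd_dvd (Finset.mem_range.2 k.succ_pos)

lemma ebar_eq_one (hchar : IsCharSeq n w G B) : Ebar B G = 1 :=
  hchar.2.2.1

lemma ebar_ne_one (hchar : IsCharSeq n w G B) {k : ℕ} (hk : k < G) : Ebar B k ≠ 1 :=
  hchar.2.2.2 k hk

lemma eq_sInf (hchar : IsCharSeq n w G B) {k : ℕ} (hk : k < G) :
    B (k + 1) = sInf (supportNotDvd w (Ebar B k)) :=
  hchar.2.1 (k + 1) k.succ_pos hk

lemma exists_eq_sInf (hchar : IsCharSeq n w G B)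
    (hprim : ∀ d : ℕ, d ∣ n → (∀ j, coeff j w ≠ 0 → d ∣ j) → d = 1)
    {d : ℕ} (hdn : d ∣ n) (hd : d ≠ 1) :
    ∃ k < G, B (k + 1) = sInf (supportNotDvd w d) := by
  obtain ⟨k, hdk, hdk'⟩ := Nat.exists_not_and_succ_of_not_zero_of_exists
    (p := fun i => ¬ d ∣ Ebar B i) (not_not.2 (hchar.ebar_zero ▸ hdn))
    ⟨G, fun h => hd (Nat.dvd_one.1 (hchar.ebar_eq_one ▸ h))⟩
  rw [not_not] at hdk
  have hkG : k < G := by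
    by_contra! hGk
    have hone : Ebar B k ∣ 1 :=
      hchar.ebar_eq_one ▸ Finset.gcd_mono (Finset.range_subset_range.2 (Nat.succ_le_succ hGk))
    exact hd (Nat.dvd_one.1 (hdk.trans hone))
  have hmem : B (k + 1) ∈ supportNotDvd w (Ebar B k) := hchar.eq_sInf hkG ▸
    Nat.sInf_mem (supportNotDvd_nonempty hprim (hchar.ebar_dvd k) (hchar.ebar_ne_one hkG))
  have hmem' : B (k + 1) ∈ supportNotDvd w d := ⟨hmem.1, fun h => hdk' <| by
    rw [Ebar, Finset.range_add_one, Finset.gcd_insert]; exact dvd_gcd h hdk⟩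
  refine ⟨k, hkG, le_antisymm ?_ (Nat.sInf_le hmem')⟩
  rw [hchar.eq_sInf hkG]
  exact csInf_le_csInf' ⟨_, hmem'⟩ (supportNotDvd_mono w hdk)

end IsCharSeq

theorem stmt_7_general (f : Polynomial (PowerSeries ℂ)) (N G : ℕ) (B : ℕ → ℕ) (y : PowerSeries ℂ)
    (hN : 1 ≤ N)
    (hparam : IsNPParam f N y) (hchar : IsCharSeq N y G B) :
    {d : ℕ | ∃ ω ω' : ℂ, ω ^ N = 1 ∧ ω' ^ N = 1 ∧ ω ≠ ω' ∧
        (PowerSeries.rescale ω y - PowerSeries.rescale ω' y).order = (d : ℕ∞)} =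
      {d : ℕ | ∃ i, 1 ≤ i ∧ i ≤ G ∧ B i = d} := by
  obtain ⟨-, -, hprim⟩ := hparam
  ext d
  constructor
  · rintro ⟨ω, ω', hω, hω', hne, hord⟩
    have hω'0 : ω' ≠ 0 := by rintro rfl; simp [zero_pow (by omega : N ≠ 0)] at hω'
    have he : orderOf (ω / ω') ∣ N :=
      orderOf_dvd_of_pow_eq_one (by rw [div_pow, hω, hω', div_one])
    have he1 : orderOf (ω / ω') ≠ 1 := by rwa [Ne, orderOf_eq_one_iff, div_eq_one_iff_eq hω'0]
    obtain ⟨k, hkG, hBk⟩ := hchar.exists_eq_sInf hprim he he1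
    rw [order_rescale_sub_rescale y hω'0 (supportNotDvd_nonempty hprim he he1)] at hord
    exact ⟨k + 1, by omega, hkG, hBk.trans (by exact_mod_cast hord)⟩
  · rintro ⟨i, hi, hiG, rfl⟩
    obtain ⟨k, rfl⟩ : ∃ k, i = k + 1 := ⟨i - 1, by omega⟩
    have he := hchar.ebar_dvd k
    have he1 := hchar.ebar_ne_one (k := k) (by omega)
    obtain ⟨ω, hω⟩ : ∃ ω : ℂ, IsPrimitiveRoot ω (Ebar B k) :=
      ⟨_, Complex.isPrimitiveRoot_exp _ (ne_zero_of_dvd_ne_zero (by omega) he)⟩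
    have hord : orderOf (ω / 1) = Ebar B k := by rw [div_one, hω.eq_orderOf]
    refine ⟨ω, 1, (hω.pow_eq_one_iff_dvd N).2 he, one_pow N, fun h => he1 ?_, ?_⟩
    · rw [← hord, h, div_one, orderOf_one]
    · rw [order_rescale_sub_rescale y one_ne_zero (hord ▸ supportNotDvd_nonempty hprim he he1),
        hord, hchar.eq_sInf (by omega)]

/-- **The characteristic exponents as orders of differences of conjugate parameterizations.**
With `f` an irreducible monic polynomial in `ℂ[[X]][Y]` of degree `N ≥ 1`, with primitive
Newton–Puiseux parameterization `X = T ^ N`, `Y = y (T)` and characteristic exponents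
`B 0, …, B G`, the set of `T`-adic orders `ord_T (y (ω T) - y (ω' T))`, for `ω ≠ ω'`
complex `N`-th roots of unity, equals `{B 1, …, B G}`. -/
theorem stmt_7 (f : Polynomial (PowerSeries ℂ)) (N G : ℕ) (B : ℕ → ℕ) (y : PowerSeries ℂ)
    (hN : 1 ≤ N) (hmonic : f.Monic) (hdeg : f.natDegree = N) (hirr : Irreducible f)
    (h00 : PowerSeries.constantCoeff (Polynomial.eval 0 f) = 0)
    (hparam : IsNPParam f N y) (hchar : IsCharSeq N y G B) :
    {d : ℕ | ∃ ω ω' : ℂ, ω ^ N = 1 ∧ ω' ^ N = 1 ∧ ω ≠ ω' ∧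
        (PowerSeries.rescale ω y - PowerSeries.rescale ω' y).order = (d : ℕ∞)} =
      {d : ℕ | ∃ i, 1 ≤ i ∧ i ≤ G ∧ B i = d} :=
  stmt_7_general f N G B y hN hparam hchar
end
end

section
/- With notation as in the setup, let φ ∈ ℂ[[X]][Y] be monic, irreducible over ℂ[[X]], of degree M ≥ 1 in Y, with φ(0,0) = 0 and φ ≠ f, and with primitive Newton–Puiseux parameterization X = U^M, Y = z(U) ∈ ℂ[[U]]. Define the coincidence order K(f,φ) := (1/(NM)) · max{ ord_S( y(ωS^M) − z(ω′S^N) ) : ω a complex N-th root of unity, ω′ a complex M-th root of unity }, where ord_S is the S-adic order in ℂ[[S]]. Let k ∈ {0, …, G} be the smallest integer such that K(f,φ) < B_{k+1}/N (with B_{G+1} = ∞). Then (f, φ) = M · ( Σ_{i=1}^{k} ((E_{i−1} − E_i)/N)·B_i + E_k·K(f,φ) ); equivalently, for k ≥ 1, (f,φ)/M = B̄_k/(N₁⋯N_{k−1}) + (N·K(f,φ) − B_k)/(N₁⋯N_k). -/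
noncomputable section

/-!
Write `y_ω (S) = y (ω S ^ M)` and `z_ω' (S) = z (ω' S ^ N)` for `ω ^ N = 1`, `ω' ^ M = 1`.
After `X ↦ S ^ (N M)` the polynomial `φ` splits as `∏_ω' (Y - z_ω')`, so for each `ω` the orders
`ord (y_ω - z_ω')` add up over `ω'` to `M (f, φ)`.  For fixed `ω'`, pick `ω₀` of maximal contact
`D`; then `ord (y_ω - z_ω') = min D (M · ord (y (u T) - y (T)))` with `u = ω / ω₀`, and
`ord (y (u T) - y (T)) = B l` exactly on the `E (l-1) - E l` roots `u` of order dividing `E (l-1)`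
but not `E l`.  Summing over `ω` gives `M Σ_{l ≤ k} (E (l-1) - E l) B l + E k D`, and counting the
double sum both ways yields the formula.
-/

open PowerSeries

section SubstPow

lemma substPow_eq_expand {n : ℕ} (hn : n ≠ 0) (σ : ℂ⟦X⟧) : substPow n σ = expand n hn σ := by
  ext j
  simp [substPow, PowerSeries.coeff_expand]

lemma order_substPow {n : ℕ} (hn : n ≠ 0) (σ : ℂ⟦X⟧) :
    (substPow n σ).order = n * σ.order := by
  rw [substPow_eq_expand hn, order_expand, nsmul_eq_mul]

lemma substPow_sub {n : ℕ} (hn : n ≠ 0) (σ τ : ℂ⟦X⟧) :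
    substPow n (σ - τ) = substPow n σ - substPow n τ := by
  simp only [substPow_eq_expand hn, map_sub]

lemma substPow_injective {n : ℕ} (hn : n ≠ 0) : Function.Injective (substPow n) := by
  intro σ τ h
  ext j
  simpa [substPow_eq_expand hn] using congrArg (PowerSeries.coeff (n * j)) h

lemma rescale_substPow (a : ℂ) (n : ℕ) (σ : ℂ⟦X⟧) :
    rescale a (substPow n σ) = substPow n (rescale (a ^ n) σ) := by
  ext j
  simp only [substPow, coeff_rescale, coeff_mk]
  split_ifs with h
  · rw [← pow_mul, Nat.mul_div_cancel' h]
  · rw [mul_zero]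

lemma evalCurve_eq_eval_map {n : ℕ} (hn : n ≠ 0) (w : ℂ⟦X⟧) (φ : Polynomial ℂ⟦X⟧) :
    evalCurve n w φ = (φ.map (expand n hn).toRingHom).eval w := by
  rw [Polynomial.eval_map, Polynomial.eval₂_eq_sum_range]
  simp [evalCurve, substPow_eq_expand hn]

lemma rescale_evalCurve {n : ℕ} (hn : n ≠ 0) {ω : ℂ} (hω : ω ^ n = 1) (w : ℂ⟦X⟧)
    (φ : Polynomial ℂ⟦X⟧) :
    rescale ω (evalCurve n w φ) = evalCurve n (rescale ω w) φ := by
  have hfix : (rescale ω).comp (expand n hn).toRingHom = (expand n hn).toRingHom := by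
    ext1 σ
    simp [← substPow_eq_expand hn, rescale_substPow, hω]
  rw [evalCurve_eq_eval_map hn, evalCurve_eq_eval_map hn, Polynomial.eval_map,
    Polynomial.eval_map, Polynomial.hom_eval₂, hfix]

lemma substPow_evalCurve {n m k : ℕ} (hn : n ≠ 0) (hm : m ≠ 0) (hk : k ≠ 0) (hnm : n * m = k)
    (w : ℂ⟦X⟧) (φ : Polynomial ℂ⟦X⟧) :
    substPow n (evalCurve m w φ) = (φ.map (expand k hk).toRingHom).eval (substPow n w) := by
  subst hnm
  rw [evalCurve_eq_eval_map hm, substPow_eq_expand hn, substPow_eq_expand hn,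
    Polynomial.eval_map, Polynomial.eval_map, ← AlgHom.coe_toRingHom, Polynomial.hom_eval₂,
    expand_mul_eq_comp n hn m hm]
  rfl

end SubstPow

section General

lemma PowerSeries.le_order_rescale {R : Type*} [CommSemiring R] (a : R) (f : R⟦X⟧) :
    f.order ≤ (rescale a f).order :=
  le_order _ _ fun i hi => by rw [coeff_rescale, coeff_of_lt_order i hi, mul_zero]

lemma PowerSeries.order_rescale {K : Type*} [Field K] {a : K} (ha : a ≠ 0) (f : K⟦X⟧) :
    (rescale a f).order = f.order := by
  refine le_antisymm ?_ (le_order_rescale a f)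
  calc (rescale a f).order ≤ (rescale a⁻¹ (rescale a f)).order := le_order_rescale _ _
    _ = f.order := by rw [rescale_rescale, mul_inv_cancel₀ ha, rescale_one, RingHom.id_apply]

lemma PowerSeries.order_sub_eq_min_of_le {R : Type*} [Ring R] {a b c : R⟦X⟧} {d : ℕ∞}
    (hac : (a - c).order = d) (hbc : (b - c).order ≤ d) :
    (b - c).order = min d (b - a).order := by
  have hsplit : b - c = (b - a) + (a - c) := (sub_add_sub_cancel b a c).symm
  by_cases hd : (b - a).order = d
  · rw [hd, min_self]
    refine le_antisymm hbc ?_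
    calc d = min (b - a).order (a - c).order := by rw [hd, hac, min_self]
      _ ≤ (b - c).order := hsplit ▸ min_order_le_order_add _ _
  · rw [hsplit, order_add_of_order_ne _ _ (by rwa [hac]), hac, min_comm]

lemma Polynomial.Monic.eq_prod_X_sub_C_of_injOn {R ι : Type*} [CommRing R] [IsDomain R]
    {p : Polynomial R} (hp : p.Monic) {s : Finset ι} {r : ι → R} (hr : Set.InjOn r s)
    (hroot : ∀ i ∈ s, p.IsRoot (r i)) (hdeg : p.natDegree ≤ s.card) :
    p = ∏ i ∈ s, (Polynomial.X - Polynomial.C (r i)) := by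
  classical
  rw [← Finset.prod_image (f := fun a => Polynomial.X - Polynomial.C a) hr]
  refine Polynomial.eq_of_monic_of_dvd_of_natDegree_le (Polynomial.monic_prod_X_sub_C _ _) hp ?_
    (by simpa [Finset.card_image_of_injOn hr] using hdeg)
  rw [Finset.prod_eq_multiset_prod, Multiset.prod_X_sub_C_dvd_iff_le_roots hp.ne_zero,
    Finset.val_le_iff_val_subset]
  intro a ha
  obtain ⟨i, hi, rfl⟩ := Finset.mem_image.mp ha
  exact (Polynomial.mem_roots hp.ne_zero).mpr (hroot i hi)

lemma sum_nthRootsFinset_mul_right {β : Type*} [AddCommMonoid β] {n : ℕ} (hn : n ≠ 0)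
    {ω₀ : ℂ} (hω₀ : ω₀ ^ n = 1) (F : ℂ → β) :
    ∑ ω ∈ Polynomial.nthRootsFinset n (1 : ℂ), F (ω * ω₀) =
      ∑ ω ∈ Polynomial.nthRootsFinset n (1 : ℂ), F ω := by
  have hω₀0 : ω₀ ≠ 0 := by rintro rfl; simp [hn] at hω₀
  have hmem := fun ω => Polynomial.mem_nthRootsFinset (Nat.pos_of_ne_zero hn) (1 : ℂ) (x := ω)
  refine Finset.sum_nbij' (· * ω₀) (· * ω₀⁻¹) ?_ ?_ ?_ ?_ (fun _ _ => rfl)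
  · intro ω hω; simp_all [mul_pow]
  · intro ω hω; simp_all [mul_pow]
  · intro ω _; simp [hω₀0]
  · intro ω _; simp [hω₀0]

lemma sum_Ioc_tsub_mul_min_add {E B : ℕ → ℕ} {M D k G : ℕ} (hkG : k ≤ G)
    (hE : ∀ l, E (l + 1) ≤ E l) (hlow : ∀ l ∈ Finset.Ioc 0 k, M * B l ≤ D)
    (hhigh : ∀ l ∈ Finset.Ioc k G, D < M * B l) :
    ∑ l ∈ Finset.Ioc 0 G, (E (l - 1) - E l) * min D (M * B l) + E G * D =
      M * ∑ l ∈ Finset.Icc 1 k, (E (l - 1) - E l) * B l + E k * D := by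
  induction G, hkG using Nat.le_induction with
  | base =>
    rw [show Finset.Icc 1 k = Finset.Ioc 0 k from Finset.Icc_succ_left_eq_Ioc 0 k,
      Finset.mul_sum]
    congr 1
    refine Finset.sum_congr rfl fun l hl => ?_
    rw [min_eq_right (hlow l hl), mul_left_comm]
  | succ G hkG ih =>
    have hmin : min D (M * B (G + 1)) = D :=
      min_eq_left (hhigh (G + 1) (Finset.mem_Ioc.mpr ⟨by omega, le_rfl⟩)).le
    rw [Finset.sum_Ioc_succ_top (Nat.zero_le G), hmin, Nat.add_sub_cancel, add_assoc,
      ← add_mul, Nat.sub_add_cancel (hE G),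
      ih fun l hl => hhigh l (Finset.Ioc_subset_Ioc_right (Nat.le_succ G) hl)]

end General

section Ebar
variable {B : ℕ → ℕ}

lemma Ebar_zero : Ebar B 0 = B 0 := by
  simp [Ebar]

lemma Ebar_succ (i : ℕ) : Ebar B (i + 1) = GCDMonoid.gcd (B (i + 1)) (Ebar B i) := by
  rw [Ebar, Ebar, Finset.range_add_one, Finset.gcd_insert]

lemma Ebar_succ_dvd (i : ℕ) : Ebar B (i + 1) ∣ Ebar B i := by
  rw [Ebar_succ]
  exact gcd_dvd_right _ _

lemma Ebar_dvd_B {i j : ℕ} (hj : j ≤ i) : Ebar B i ∣ B j :=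
  Finset.gcd_dvd (Finset.mem_range.mpr (Nat.lt_succ_of_le hj))

lemma Ebar_pos (hB0 : B 0 ≠ 0) (i : ℕ) : 0 < Ebar B i := by
  refine Nat.pos_of_ne_zero fun h => hB0 ?_
  simpa [h] using Ebar_dvd_B (B := B) (Nat.zero_le i)

end Ebar

namespace IsCharSeq
variable {N G : ℕ} {B : ℕ → ℕ} {y : ℂ⟦X⟧}

lemma B_succ_eq_sInf (hchar : IsCharSeq N y G B) {i : ℕ} (hi : i < G) :
    B (i + 1) = sInf {j | coeff j y ≠ 0 ∧ ¬ Ebar B i ∣ j} :=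
  hchar.2.1 (i + 1) (Nat.le_add_left 1 i) hi

lemma B_succ_spec (hchar : IsCharSeq N y G B)
    (hprim : ∀ d : ℕ, d ∣ N → (∀ j, coeff j y ≠ 0 → d ∣ j) → d = 1) {i : ℕ} (hi : i < G) :
    coeff (B (i + 1)) y ≠ 0 ∧ ¬ Ebar B i ∣ B (i + 1) := by
  have hne : {j | coeff j y ≠ 0 ∧ ¬ Ebar B i ∣ j}.Nonempty := by
    by_contra hempty
    have hall : ∀ j, coeff j y ≠ 0 → Ebar B i ∣ j := fun j hj => by
      by_contra hdvd
      exact hempty ⟨j, hj, hdvd⟩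
    exact hchar.2.2.2 i hi (hprim _ (hchar.1 ▸ Ebar_dvd_B (Nat.zero_le i)) hall)
  rw [hchar.B_succ_eq_sInf hi]
  exact Nat.sInf_mem hne

lemma Ebar_dvd_of_lt_B_succ (hchar : IsCharSeq N y G B) {i j : ℕ} (hi : i < G)
    (hj : j < B (i + 1)) (hc : coeff j y ≠ 0) : Ebar B i ∣ j := by
  by_contra hdvd
  rw [hchar.B_succ_eq_sInf hi] at hj
  exact Nat.notMem_of_lt_sInf hj ⟨hc, hdvd⟩

lemma B_succ_lt (hchar : IsCharSeq N y G B)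
    (hprim : ∀ d : ℕ, d ∣ N → (∀ j, coeff j y ≠ 0 → d ∣ j) → d = 1) {i : ℕ} (hi : i + 1 < G) :
    B (i + 1) < B (i + 2) := by
  obtain ⟨hcoeff, hndvd⟩ := hchar.B_succ_spec hprim hi
  by_contra hle
  rcases (not_lt.mp hle).lt_or_eq with hlt | heq
  · exact hndvd ((Ebar_succ_dvd i).trans
      (hchar.Ebar_dvd_of_lt_B_succ (Nat.lt_of_succ_lt hi) hlt hcoeff))
  · exact hndvd (heq ▸ Ebar_dvd_B le_rfl)

lemma B_le_B (hchar : IsCharSeq N y G B)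
    (hprim : ∀ d : ℕ, d ∣ N → (∀ j, coeff j y ≠ 0 → d ∣ j) → d = 1) {l l' : ℕ} (hl : 1 ≤ l)
    (hll' : l ≤ l') (hl' : l' ≤ G) : B l ≤ B l' := by
  induction l', hll' using Nat.le_induction with
  | base => rfl
  | succ m hlm ih =>
    obtain ⟨i, rfl⟩ := Nat.exists_eq_add_of_le' (hl.trans hlm)
    exact (ih (by omega)).trans (hchar.B_succ_lt hprim (by omega)).le

lemma order_rescale_sub_self (hchar : IsCharSeq N y G B)
    (hprim : ∀ d : ℕ, d ∣ N → (∀ j, coeff j y ≠ 0 → d ∣ j) → d = 1) {i : ℕ} (hi : i < G)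
    {u : ℂ} (hu : u ^ Ebar B i = 1) (hu' : u ^ Ebar B (i + 1) ≠ 1) :
    (rescale u y - y).order = B (i + 1) := by
  obtain ⟨hcoeff, -⟩ := hchar.B_succ_spec hprim hi
  have hdvd : orderOf u ∣ Ebar B i := orderOf_dvd_of_pow_eq_one hu
  have hpowB : u ^ B (i + 1) ≠ 1 := fun h => hu' <| orderOf_dvd_iff_pow_eq_one.mp <| by
    rw [Ebar_succ]
    exact dvd_gcd (orderOf_dvd_of_pow_eq_one h) hdvd
  rw [order_eq_nat]
  refine ⟨?_, fun j hj => ?_⟩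
  · rw [map_sub, coeff_rescale, ← sub_one_mul]
    exact mul_ne_zero (sub_ne_zero.mpr hpowB) hcoeff
  · rw [map_sub, coeff_rescale, ← sub_one_mul]
    by_cases hc : coeff j y = 0
    · rw [hc, mul_zero]
    · obtain ⟨c, rfl⟩ := hdvd.trans (hchar.Ebar_dvd_of_lt_B_succ hi hj hc)
      rw [pow_mul, pow_orderOf_eq_one, one_pow, sub_self, zero_mul]

lemma sum_nthRootsFinset_Ebar {β : Type*} [AddCommMonoid β] (hchar : IsCharSeq N y G B)
    (hprim : ∀ d : ℕ, d ∣ N → (∀ j, coeff j y ≠ 0 → d ∣ j) → d = 1) (hN : N ≠ 0)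
    (h : ℕ∞ → β) {i : ℕ} (hi : i ≤ G) :
    ∑ u ∈ Polynomial.nthRootsFinset (Ebar B i) (1 : ℂ), h (rescale u y - y).order =
      ∑ l ∈ Finset.Ioc i G, (Ebar B (l - 1) - Ebar B l) • h (B l) + h ⊤ := by
  have hE := Ebar_pos (B := B) (hchar.1 ▸ hN)
  have hmem := fun (e : ℕ) (u : ℂ) => Polynomial.mem_nthRootsFinset (hE e) 1 (x := u)
  have hcard (e : ℕ) : (Polynomial.nthRootsFinset (Ebar B e) (1 : ℂ)).card = Ebar B e :=
    (Complex.isPrimitiveRoot_exp _ (hE e).ne').card_nthRootsFinset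
  obtain ⟨m, rfl⟩ := Nat.exists_eq_add_of_le hi
  clear hi
  induction m generalizing i with
  | zero =>
    rw [Nat.add_zero] at hchar ⊢
    have hroots : Polynomial.nthRootsFinset (Ebar B i) (1 : ℂ) = {1} := by
      ext u
      rw [hmem, show Ebar B i = 1 from hchar.2.2.1]
      simp
    simp [hroots]
  | succ m ih =>
    have hchar' : IsCharSeq N y (i + 1 + m) B := by rwa [Nat.add_right_comm, Nat.add_assoc]
    have hsub : Polynomial.nthRootsFinset (Ebar B (i + 1)) (1 : ℂ) ⊆
        Polynomial.nthRootsFinset (Ebar B i) (1 : ℂ) := fun u hu => by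
      obtain ⟨c, hc⟩ := Ebar_succ_dvd (B := B) i
      rw [hmem] at hu ⊢
      rw [hc, pow_mul, hu, one_pow]
    have hlayer : ∀ u ∈ Polynomial.nthRootsFinset (Ebar B i) (1 : ℂ) \
        Polynomial.nthRootsFinset (Ebar B (i + 1)) (1 : ℂ),
        h (rescale u y - y).order = h (B (i + 1)) := fun u hu => by
      rw [Finset.mem_sdiff, hmem, hmem] at hu
      rw [hchar.order_rescale_sub_self hprim (by omega) hu.1 hu.2]
    rw [← Finset.sum_sdiff hsub, Finset.sum_congr rfl hlayer, Finset.sum_const,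
      Finset.card_sdiff_of_subset hsub, hcard, hcard, show i + (m + 1) = i + 1 + m by omega,
      ih hchar', ← Finset.sum_Ioc_consecutive _ (Nat.le_succ i) (by omega),
      Nat.Ioc_succ_singleton, Finset.sum_singleton, Nat.add_sub_cancel]
    exact (add_assoc _ _ _).symm

lemma sum_min_order_rescale_sub (hchar : IsCharSeq N y G B)
    (hprim : ∀ d : ℕ, d ∣ N → (∀ j, coeff j y ≠ 0 → d ∣ j) → d = 1) (hN : N ≠ 0)
    {M D k : ℕ} (hM : M ≠ 0) (hkG : k ≤ G) (hkub : k < G → D < M * B (k + 1))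
    (hklb : ∀ l < k, M * B (l + 1) ≤ D) :
    ∑ u ∈ Polynomial.nthRootsFinset N (1 : ℂ), min (D : ℕ∞) (M * (rescale u y - y).order) =
      ((M * ∑ l ∈ Finset.Icc 1 k, (Ebar B (l - 1) - Ebar B l) * B l + Ebar B k * D : ℕ) : ℕ∞) := by
  have hlow : ∀ l ∈ Finset.Ioc 0 k, M * B l ≤ D := fun l hl => by
    obtain ⟨l, rfl⟩ := Nat.exists_eq_add_one.mpr (Finset.mem_Ioc.mp hl).1
    exact hklb l (by simpa using (Finset.mem_Ioc.mp hl).2)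
  have hhigh : ∀ l ∈ Finset.Ioc k G, D < M * B l := fun l hl => by
    obtain ⟨hkl, hlG⟩ := Finset.mem_Ioc.mp hl
    exact (hkub (hkl.trans_le hlG)).trans_le
      (Nat.mul_le_mul_left M (hchar.B_le_B hprim (Nat.le_add_left 1 k) hkl hlG))
  have hE (l : ℕ) : Ebar B (l + 1) ≤ Ebar B l :=
    Nat.le_of_dvd (Ebar_pos (hchar.1 ▸ hN) l) (Ebar_succ_dvd l)
  have hlayers := hchar.sum_nthRootsFinset_Ebar hprim hN (fun x => min (D : ℕ∞) (M * x))
    (Nat.zero_le G)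
  rw [Ebar_zero, hchar.1] at hlayers
  rw [hlayers, ← sum_Ioc_tsub_mul_min_add hkG hE hlow hhigh, show Ebar B G = 1 from hchar.2.2.1,
    ENat.mul_top (Nat.cast_ne_zero.mpr hM)]
  simp only [Nat.cast_add, Nat.cast_sum, Nat.cast_mul, Nat.mono_cast.map_min, nsmul_eq_mul,
    one_mul, min_top_right]

end IsCharSeq

def branchDiff (N M : ℕ) (y z : ℂ⟦X⟧) (ω ω' : ℂ) : ℂ⟦X⟧ :=
  substPow M (rescale ω y) - substPow N (rescale ω' z)

lemma eq_one_of_rescale_eq_self {n : ℕ} {w : ℂ⟦X⟧}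
    (hprim : ∀ d : ℕ, d ∣ n → (∀ j, coeff j w ≠ 0 → d ∣ j) → d = 1) {u : ℂ} (hu : u ^ n = 1)
    (h : rescale u w = w) : u = 1 := by
  refine orderOf_eq_one_iff.mp (hprim _ (orderOf_dvd_of_pow_eq_one hu) fun j hj => ?_)
  refine orderOf_dvd_of_pow_eq_one (mul_right_cancel₀ hj ?_)
  rw [← coeff_rescale, h, one_mul]

section Branches
variable {N M : ℕ} {y z : ℂ⟦X⟧}

lemma injOn_substPow_rescale (hN : N ≠ 0) (hM : M ≠ 0)
    (hprim : ∀ d : ℕ, d ∣ M → (∀ j, coeff j z ≠ 0 → d ∣ j) → d = 1) :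
    Set.InjOn (fun ω' => substPow N (rescale ω' z)) (Polynomial.nthRootsFinset M (1 : ℂ)) := by
  intro ω₁ h₁ ω₂ h₂ h
  have hmem := fun ω => Polynomial.mem_nthRootsFinset (Nat.pos_of_ne_zero hM) (1 : ℂ) (x := ω)
  rw [Finset.mem_coe, hmem] at h₁ h₂
  have hω₂ : ω₂ ≠ 0 := by rintro rfl; simp [hM] at h₂
  have hquot : rescale (ω₁ * ω₂⁻¹) z = z := by
    rw [← rescale_rescale, substPow_injective hN h, rescale_rescale,
      mul_inv_cancel₀ hω₂, rescale_one, RingHom.id_apply]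
  have := eq_one_of_rescale_eq_self hprim (by rw [mul_pow, inv_pow, h₁, h₂, inv_one, one_mul])
    hquot
  rwa [mul_inv_eq_one₀ hω₂] at this

lemma map_expand_eq_prod (hN : N ≠ 0) (hM : M ≠ 0) {φ : Polynomial ℂ⟦X⟧} (hmonic : φ.Monic)
    (hdeg : φ.natDegree = M) (heval : evalCurve M z φ = 0)
    (hprim : ∀ d : ℕ, d ∣ M → (∀ j, coeff j z ≠ 0 → d ∣ j) → d = 1) :
    φ.map (expand (N * M) (mul_ne_zero hN hM)).toRingHom =
      ∏ ω' ∈ Polynomial.nthRootsFinset M (1 : ℂ),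
        (Polynomial.X - Polynomial.C (substPow N (rescale ω' z))) := by
  refine (hmonic.map _).eq_prod_X_sub_C_of_injOn (injOn_substPow_rescale hN hM hprim)
    (fun ω' hω' => ?_) ?_
  · rw [Polynomial.mem_nthRootsFinset (Nat.pos_of_ne_zero hM)] at hω'
    rw [Polynomial.IsRoot, ← substPow_evalCurve hN hM _ rfl, ← rescale_evalCurve hM hω', heval,
      map_zero, substPow_eq_expand hN, map_zero]
  · rw [hmonic.natDegree_map, hdeg, (Complex.isPrimitiveRoot_exp M hM).card_nthRootsFinset]

lemma sum_order_branchDiff_right (hN : N ≠ 0) (hM : M ≠ 0) {φ : Polynomial ℂ⟦X⟧}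
    (hmonic : φ.Monic) (hdeg : φ.natDegree = M) (heval : evalCurve M z φ = 0)
    (hprim : ∀ d : ℕ, d ∣ M → (∀ j, coeff j z ≠ 0 → d ∣ j) → d = 1) {ω : ℂ} (hω : ω ^ N = 1) :
    ∑ ω' ∈ Polynomial.nthRootsFinset M (1 : ℂ), (branchDiff N M y z ω ω').order =
      M * (evalCurve N y φ).order := by
  have hω₀ : ω ≠ 0 := by rintro rfl; simp [hN] at hω
  have hprod : ∏ ω' ∈ Polynomial.nthRootsFinset M (1 : ℂ), branchDiff N M y z ω ω' =
      substPow M (rescale ω (evalCurve N y φ)) := by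
    rw [rescale_evalCurve hN hω, substPow_evalCurve hM hN (mul_ne_zero hN hM) (Nat.mul_comm M N),
      map_expand_eq_prod hN hM hmonic hdeg heval hprim, Polynomial.eval_prod]
    simp [branchDiff]
  rw [← order_prod, hprod, order_substPow hM, order_rescale hω₀]

lemma rescale_branchDiff (η ω ω' : ℂ) :
    rescale η (branchDiff N M y z ω ω') = branchDiff N M y z (ω * η ^ M) (ω' * η ^ N) := by
  rw [branchDiff, branchDiff, map_sub, rescale_substPow, rescale_substPow, rescale_rescale,
    rescale_rescale]

lemma exists_order_branchDiff_eq (hN : N ≠ 0) (hM : M ≠ 0) {D : ℕ∞}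
    (hDmax : ∃ ω ω' : ℂ, ω ^ N = 1 ∧ ω' ^ M = 1 ∧ (branchDiff N M y z ω ω').order = D)
    {ω' : ℂ} (hω' : ω' ^ M = 1) :
    ∃ ω₀ : ℂ, ω₀ ^ N = 1 ∧ (branchDiff N M y z ω₀ ω').order = D := by
  obtain ⟨ω₁, ω₁', hω₁, hω₁', hD⟩ := hDmax
  have hω₁'0 : ω₁' ≠ 0 := by rintro rfl; simp [hM] at hω₁'
  have hω'0 : ω' ≠ 0 := by rintro rfl; simp [hM] at hω'
  obtain ⟨η, hη⟩ := IsAlgClosed.exists_pow_nat_eq (ω' * ω₁'⁻¹) (Nat.pos_of_ne_zero hN)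
  have hη0 : η ≠ 0 := by
    rintro rfl
    simp [hN, hω'0, hω₁'0] at hη
  refine ⟨ω₁ * η ^ M, ?_, ?_⟩
  · rw [mul_pow, hω₁, one_mul, ← pow_mul, mul_comm M N, pow_mul, hη, mul_pow, inv_pow, hω',
      hω₁', inv_one, one_mul]
  · have hω'eq : ω₁' * η ^ N = ω' := by rw [hη, mul_comm ω', ← mul_assoc, mul_inv_cancel₀ hω₁'0,
      one_mul]
    rw [← hω'eq, ← rescale_branchDiff, order_rescale hη0, hD]

/-- Comparing with a conjugate `ω₀` of maximal contact: the ultrametric inequality is an equality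
except where both terms have order `D`, and there maximality of `D` forces equality. -/
lemma order_branchDiff_eq_min (hM : M ≠ 0) {D : ℕ∞} {ω₀ ω' : ℂ} (hω₀ : ω₀ ≠ 0)
    (hD : (branchDiff N M y z ω₀ ω').order = D) {ω : ℂ}
    (hle : (branchDiff N M y z ω ω').order ≤ D) :
    (branchDiff N M y z ω ω').order = min D (M * (rescale (ω * ω₀⁻¹) y - y).order) := by
  rw [branchDiff] at hD hle ⊢
  rw [order_sub_eq_min_of_le hD hle, ← substPow_sub hM, order_substPow hM,
    ← order_rescale hω₀ (rescale (ω * ω₀⁻¹) y - y), map_sub, rescale_rescale,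
    inv_mul_cancel_right₀ hω₀]

lemma sum_order_branchDiff_left {G D k : ℕ} {B : ℕ → ℕ} (hchar : IsCharSeq N y G B)
    (hprim : ∀ d : ℕ, d ∣ N → (∀ j, coeff j y ≠ 0 → d ∣ j) → d = 1) (hN : N ≠ 0) (hM : M ≠ 0)
    (hDmax : ∃ ω ω' : ℂ, ω ^ N = 1 ∧ ω' ^ M = 1 ∧ (branchDiff N M y z ω ω').order = D)
    (hDub : ∀ ω ω' : ℂ, ω ^ N = 1 → ω' ^ M = 1 → (branchDiff N M y z ω ω').order ≤ D)
    (hkG : k ≤ G) (hkub : k < G → D < M * B (k + 1)) (hklb : ∀ l < k, M * B (l + 1) ≤ D)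
    {ω' : ℂ} (hω' : ω' ^ M = 1) :
    ∑ ω ∈ Polynomial.nthRootsFinset N (1 : ℂ), (branchDiff N M y z ω ω').order =
      ((M * ∑ l ∈ Finset.Icc 1 k, (Ebar B (l - 1) - Ebar B l) * B l + Ebar B k * D : ℕ) : ℕ∞) := by
  have hmem := fun ω => Polynomial.mem_nthRootsFinset (Nat.pos_of_ne_zero hN) (1 : ℂ) (x := ω)
  obtain ⟨ω₀, hω₀, hD⟩ := exists_order_branchDiff_eq hN hM hDmax hω'
  have hω₀0 : ω₀ ≠ 0 := by rintro rfl; simp [hN] at hω₀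
  rw [Finset.sum_congr rfl fun ω hω =>
      order_branchDiff_eq_min hM hω₀0 hD (hDub ω ω' ((hmem ω).mp hω) hω'),
    sum_nthRootsFinset_mul_right hN (by rw [inv_pow, hω₀, inv_one])
      (fun u => min (D : ℕ∞) (M * (rescale u y - y).order)),
    hchar.sum_min_order_rescale_sub hprim hN hM hkG hkub hklb]

end Branches

/-- Here `D = N M · K (f, φ)`, and the conclusion is the paper's formula multiplied by `N`. -/
theorem stmt_9_general (f : Polynomial (PowerSeries ℂ)) (N G : ℕ) (B : ℕ → ℕ) (y : PowerSeries ℂ)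
    (hN : 1 ≤ N)
    (hparam : IsNPParam f N y) (hchar : IsCharSeq N y G B)
    (φ : Polynomial (PowerSeries ℂ)) (M : ℕ) (z : PowerSeries ℂ)
    (hM : 1 ≤ M) (hφmonic : φ.Monic) (hφdeg : φ.natDegree = M)
    (hφparam : IsNPParam φ M z)
    (D k : ℕ)
    (hDmax : ∃ ω ω' : ℂ, ω ^ N = 1 ∧ ω' ^ M = 1 ∧
      (substPow M (PowerSeries.rescale ω y) -
        substPow N (PowerSeries.rescale ω' z)).order = (D : ℕ∞))
    (hDub : ∀ ω ω' : ℂ, ω ^ N = 1 → ω' ^ M = 1 →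
      (substPow M (PowerSeries.rescale ω y) -
        substPow N (PowerSeries.rescale ω' z)).order ≤ (D : ℕ∞))
    (hkG : k ≤ G) (hkub : k < G → D < M * B (k + 1))
    (hklb : ∀ l < k, M * B (l + 1) ≤ D) :
    (N : ℕ∞) * (evalCurve N y φ).order =
      ((M * ∑ i ∈ Finset.Icc 1 k, (Ebar B (i - 1) - Ebar B i) * B i
        + Ebar B k * D : ℕ) : ℕ∞) := by
  have hN₀ : N ≠ 0 := Nat.one_le_iff_ne_zero.mp hN
  have hM₀ : M ≠ 0 := Nat.one_le_iff_ne_zero.mp hM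
  have hmem (n : ℕ) (hn : n ≠ 0) (ω : ℂ) :=
    Polynomial.mem_nthRootsFinset (Nat.pos_of_ne_zero hn) (1 : ℂ) (x := ω)
  have hrows (ω) (hω : ω ∈ Polynomial.nthRootsFinset N (1 : ℂ)) :=
    sum_order_branchDiff_right (y := y) hN₀ hM₀ hφmonic hφdeg hφparam.1 hφparam.2.2
      ((hmem N hN₀ ω).mp hω)
  have hcols (ω') (hω' : ω' ∈ Polynomial.nthRootsFinset M (1 : ℂ)) :=
    sum_order_branchDiff_left hchar hparam.2.2 hN₀ hM₀ hDmax hDub hkG hkub hklb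
      ((hmem M hM₀ ω').mp hω')
  refine (ENat.mul_right_strictMono (Nat.cast_ne_zero.mpr hM₀) (ENat.natCast_ne_top M)).injective ?_
  calc (M : ℕ∞) * (N * (evalCurve N y φ).order)
      = ∑ ω ∈ Polynomial.nthRootsFinset N (1 : ℂ), ∑ ω' ∈ Polynomial.nthRootsFinset M (1 : ℂ),
          (branchDiff N M y z ω ω').order := by
        rw [Finset.sum_congr rfl hrows, Finset.sum_const,
          (Complex.isPrimitiveRoot_exp N hN₀).card_nthRootsFinset, nsmul_eq_mul, mul_left_comm]
    _ = ∑ ω' ∈ Polynomial.nthRootsFinset M (1 : ℂ), ∑ ω ∈ Polynomial.nthRootsFinset N (1 : ℂ),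
          (branchDiff N M y z ω ω').order := Finset.sum_comm
    _ = _ := by
        rw [Finset.sum_congr rfl hcols, Finset.sum_const,
          (Complex.isPrimitiveRoot_exp M hM₀).card_nthRootsFinset, nsmul_eq_mul]

/-- **Noether's formula for the intersection number of two branches.**
Let `φ` be a second monic irreducible polynomial in `ℂ[[X]][Y]`, of degree `M ≥ 1`, with
`φ ≠ f`, parameterized by `X = U ^ M`, `Y = z (U)`.  Let `D` be the maximum of the
`S`-adic orders `ord_S (y (ω S ^ M) - z (ω' S ^ N))` over `N`-th roots of unity `ω` and
`M`-th roots of unity `ω'` (so the coincidence order is `K (f, φ) = D / (N M)`), and let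
`k` be the smallest index in `{0, …, G}` with `K (f, φ) < B (k+1) / N`
(i.e. `D < M * B (k+1)`, vacuous for `k = G`).  Then
`N * (f, φ) = M * Σ_{i=1}^{k} (E (i-1) - E i) * B i + E k * D`, which is the formula
`(f,φ)/M = Σ ((E (i-1) - E i)/N) B i + E k * K (f,φ)` cleared of denominators. -/
theorem stmt_9 (f : Polynomial (PowerSeries ℂ)) (N G : ℕ) (B : ℕ → ℕ) (y : PowerSeries ℂ)
    (hN : 1 ≤ N) (hmonic : f.Monic) (hdeg : f.natDegree = N) (hirr : Irreducible f)
    (h00 : PowerSeries.constantCoeff (Polynomial.eval 0 f) = 0)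
    (hparam : IsNPParam f N y) (hchar : IsCharSeq N y G B)
    (φ : Polynomial (PowerSeries ℂ)) (M : ℕ) (z : PowerSeries ℂ)
    (hM : 1 ≤ M) (hφmonic : φ.Monic) (hφdeg : φ.natDegree = M) (hφirr : Irreducible φ)
    (hφ00 : PowerSeries.constantCoeff (Polynomial.eval 0 φ) = 0) (hφne : φ ≠ f)
    (hφparam : IsNPParam φ M z)
    (D k : ℕ)
    (hDmax : ∃ ω ω' : ℂ, ω ^ N = 1 ∧ ω' ^ M = 1 ∧
      (substPow M (PowerSeries.rescale ω y) -
        substPow N (PowerSeries.rescale ω' z)).order = (D : ℕ∞))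
    (hDub : ∀ ω ω' : ℂ, ω ^ N = 1 → ω' ^ M = 1 →
      (substPow M (PowerSeries.rescale ω y) -
        substPow N (PowerSeries.rescale ω' z)).order ≤ (D : ℕ∞))
    (hkG : k ≤ G) (hkub : k < G → D < M * B (k + 1))
    (hklb : ∀ l < k, M * B (l + 1) ≤ D) :
    (N : ℕ∞) * (evalCurve N y φ).order =
      ((M * ∑ i ∈ Finset.Icc 1 k, (Ebar B (i - 1) - Ebar B i) * B i
        + Ebar B k * D : ℕ) : ℕ∞) :=
  stmt_9_general f N G B y hN hparam hchar φ M z hM hφmonic hφdeg hφparam D k hDmax hDub hkG hkub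
    hklb
end
end
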